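/- arXiv:2509.20018 — 7 statements merged into one kernel-verified Lean document; each statement's English description precedes it below -/
import Mathlib

section
/- (No new fixed points of the radial-projection extension) Let K₁, K₂ be cones in normed linear spaces X, Y, K = K₁ × K₂, and r = (r₁,r₂), R = (R₁,R₂) with 0 < rᵢ < Rᵢ. Fix hᵢ ∈ Kᵢ with ‖hᵢ‖ = 1 and define ρ(x) = (ρ₁(x₁), ρ₂(x₂)) where ρᵢ(xᵢ) = rᵢ·(xᵢ + (rᵢ − ‖xᵢ‖)hᵢ)/‖xᵢ + (rᵢ − ‖xᵢ‖)hᵢ‖ if ‖xᵢ‖ < rᵢ and ρᵢ(xᵢ) = xᵢ if rᵢ ≤ ‖xᵢ‖ ≤ Rᵢ. Let T = (T₁,T₂) : K̄_{r,R} → K be a compact map such that for each i ∈ {1,2} and every x ∈ K̄_{r,R} with ‖xᵢ‖ = rᵢ one has xᵢ − Tᵢx ∉ Kᵢ \ {0}, and assume T has no fixed point x ∈ K̄_{r,R} with ‖xᵢ‖ = rᵢ or ‖xᵢ‖ = Rᵢ for some i. Then the extension N := T ∘ ρ : K̄_R → K has no fixed point x = (x₁,x₂) ∈ K̄_R with ‖xᵢ‖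 = rᵢ or ‖xᵢ‖ = Rᵢ for some i ∈ {1,2}. -/
open Set

/-- A cone in a normed linear space: a nonempty closed convex set, invariant under
multiplication by nonnegative scalars, with `K ∩ (-K) = {0}`. -/
def IsCone {X : Type*} [NormedAddCommGroup X] [NormedSpace ℝ X] (K : Set X) : Prop :=
  K.Nonempty ∧ IsClosed K ∧ Convex ℝ K ∧
    (∀ u ∈ K, ∀ c : ℝ, 0 ≤ c → c • u ∈ K) ∧ K ∩ (-K) = {0}

/-- The set `K̄_{r,R} = {(x₁,x₂) ∈ K₁ × K₂ : rᵢ ≤ ‖xᵢ‖ ≤ Rᵢ}`. -/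
def KrR {X Y : Type*} [NormedAddCommGroup X] [NormedAddCommGroup Y]
    (K₁ : Set X) (K₂ : Set Y) (r₁ r₂ R₁ R₂ : ℝ) : Set (X × Y) :=
  {p | p.1 ∈ K₁ ∧ p.2 ∈ K₂ ∧ r₁ ≤ ‖p.1‖ ∧ ‖p.1‖ ≤ R₁ ∧ r₂ ≤ ‖p.2‖ ∧ ‖p.2‖ ≤ R₂}

section Aux
variable {X : Type*} [NormedAddCommGroup X] [NormedSpace ℝ X]

lemma cone_add {K : Set X} (hK : IsCone K) {u w : X} (hu : u ∈ K) (hw : w ∈ K) :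
    u + w ∈ K := by
  obtain ⟨-, -, hc, hs, -⟩ := hK
  have hmid : (1/2 : ℝ) • u + (1/2 : ℝ) • w ∈ K :=
    hc hu hw (by norm_num) (by norm_num) (by norm_num)
  have := hs _ hmid 2 (by norm_num)
  simpa [smul_add, smul_smul] using this

lemma radial_aux {K : Set X} (hK : IsCone K)
    {h : X} (hh : h ∈ K) (hn : ‖h‖ = 1) {r : ℝ} (hr : 0 < r)
    {x : X} (hx : x ∈ K) (hxr : ‖x‖ < r) :
    (r / ‖x + (r - ‖x‖) • h‖) • (x + (r - ‖x‖) • h) ∈ K ∧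
    ‖(r / ‖x + (r - ‖x‖) • h‖) • (x + (r - ‖x‖) • h)‖ = r ∧
    (r / ‖x + (r - ‖x‖) • h‖) • (x + (r - ‖x‖) • h) - x ∈ K ∧
    (r / ‖x + (r - ‖x‖) • h‖) • (x + (r - ‖x‖) • h) ≠ x := by
  set c : ℝ := r - ‖x‖ with hc
  have hcpos : 0 < c := by simp [hc]; linarith
  set v : X := x + c • h with hv
  have hch : c • h ∈ K := hK.2.2.2.1 h hh c hcpos.le
  have hvK : v ∈ K := cone_add hK hx hch
  have hvne : v ≠ 0 := by
    intro h0
    have hxeq : x = -(c • h) := by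
      have : x + c • h = 0 := h0
      linear_combination (norm := abel) this
    have hxneg : x ∈ -K := by
      rw [Set.mem_neg]
      simpa [hxeq] using hch
    have hx0 : x = 0 := by
      have : x ∈ K ∩ (-K) := ⟨hx, hxneg⟩
      rw [hK.2.2.2.2] at this
      simpa using this
    rw [hx0] at hxeq
    have : ‖c • h‖ = 0 := by
      rw [show c • h = (0:X) by simpa using hxeq.symm]; simp
    rw [norm_smul, hn] at this
    simp [abs_of_pos hcpos] at this
    linarith
  have hvpos : 0 < ‖v‖ := norm_pos_iff.mpr hvne
  have hvle : ‖v‖ ≤ r := by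
    calc ‖v‖ ≤ ‖x‖ + ‖c • h‖ := norm_add_le _ _
    _ = ‖x‖ + c := by rw [norm_smul, hn, Real.norm_eq_abs, abs_of_pos hcpos]; ring
    _ = r := by simp [hc]
  have htge : 1 ≤ r / ‖v‖ := (one_le_div hvpos).mpr hvle
  have htpos : 0 < r / ‖v‖ := by positivity
  have hmem : (r / ‖v‖) • v ∈ K := hK.2.2.2.1 v hvK _ htpos.le
  have hnorm : ‖(r / ‖v‖) • v‖ = r := by
    rw [norm_smul, Real.norm_eq_abs, abs_of_pos htpos, div_mul_cancel₀ _ hvpos.ne']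
  have hdeq : (r / ‖v‖) • v - x = (r / ‖v‖ - 1) • x + ((r / ‖v‖) * c) • h := by
    simp only [hv, smul_add, sub_smul, smul_smul, one_smul]
    abel
  have hdmem : (r / ‖v‖) • v - x ∈ K := by
    rw [hdeq]
    exact cone_add hK (hK.2.2.2.1 x hx _ (by linarith))
      (hK.2.2.2.1 h hh _ (by positivity))
  have hne : (r / ‖v‖) • v ≠ x := by
    intro he
    rw [he] at hnorm
    linarith
  exact ⟨hmem, hnorm, hdmem, hne⟩

lemma rho_mem {K : Set X} (hK : IsCone K)
    {h : X} (hh : h ∈ K) (hn : ‖h‖ = 1) {r R : ℝ} (hr : 0 < r) (hrR : r < R)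
    (ρ : X → X)
    (hlt : ∀ x : X, ‖x‖ < r → ρ x = (r / ‖x + (r - ‖x‖) • h‖) • (x + (r - ‖x‖) • h))
    (hge : ∀ x : X, r ≤ ‖x‖ → ‖x‖ ≤ R → ρ x = x)
    {x : X} (hx : x ∈ K) (hxR : ‖x‖ ≤ R) :
    ρ x ∈ K ∧ r ≤ ‖ρ x‖ ∧ ‖ρ x‖ ≤ R := by
  by_cases hcase : r ≤ ‖x‖
  · rw [hge x hcase hxR]; exact ⟨hx, hcase, hxR⟩
  · push_neg at hcase
    rw [hlt x hcase]
    obtain ⟨hm, hnm, -, -⟩ := radial_aux hK hh hn hr hx hcase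
    exact ⟨hm, le_of_eq hnm.symm, by rw [hnm]; exact hrR.le⟩

end Aux

theorem no_new_fixed_points_radial_extension
    {X Y : Type*} [NormedAddCommGroup X] [NormedSpace ℝ X]
    [NormedAddCommGroup Y] [NormedSpace ℝ Y]
    {K₁ : Set X} {K₂ : Set Y} (hK₁ : IsCone K₁) (hK₂ : IsCone K₂)
    {r₁ r₂ R₁ R₂ : ℝ} (hr₁ : 0 < r₁) (hR₁ : r₁ < R₁) (hr₂ : 0 < r₂) (hR₂ : r₂ < R₂)
    (h₁ : X) (h₂ : Y) (hh₁ : h₁ ∈ K₁) (hh₂ : h₂ ∈ K₂) (hn₁ : ‖h₁‖ = 1) (hn₂ : ‖h₂‖ = 1)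
    (ρ₁ : X → X) (ρ₂ : Y → Y)
    (hρ₁lt : ∀ x : X, ‖x‖ < r₁ →
      ρ₁ x = (r₁ / ‖x + (r₁ - ‖x‖) • h₁‖) • (x + (r₁ - ‖x‖) • h₁))
    (hρ₁ge : ∀ x : X, r₁ ≤ ‖x‖ → ‖x‖ ≤ R₁ → ρ₁ x = x)
    (hρ₂lt : ∀ x : Y, ‖x‖ < r₂ →
      ρ₂ x = (r₂ / ‖x + (r₂ - ‖x‖) • h₂‖) • (x + (r₂ - ‖x‖) • h₂))
    (hρ₂ge : ∀ x : Y, r₂ ≤ ‖x‖ → ‖x‖ ≤ R₂ → ρ₂ x = x)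
    (T₁ : X × Y → X) (T₂ : X × Y → Y)
    (hmap : ∀ p ∈ KrR K₁ K₂ r₁ r₂ R₁ R₂, T₁ p ∈ K₁ ∧ T₂ p ∈ K₂)
    (hcont : ContinuousOn (fun p => (T₁ p, T₂ p)) (KrR K₁ K₂ r₁ r₂ R₁ R₂))
    (hcpt : IsCompact (closure ((fun p => (T₁ p, T₂ p)) '' (KrR K₁ K₂ r₁ r₂ R₁ R₂))))
    (hord₁ : ∀ p ∈ KrR K₁ K₂ r₁ r₂ R₁ R₂, ‖p.1‖ = r₁ → p.1 - T₁ p ∉ K₁ \ {0})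
    (hord₂ : ∀ p ∈ KrR K₁ K₂ r₁ r₂ R₁ R₂, ‖p.2‖ = r₂ → p.2 - T₂ p ∉ K₂ \ {0})
    (hnofix : ∀ p ∈ KrR K₁ K₂ r₁ r₂ R₁ R₂,
      (‖p.1‖ = r₁ ∨ ‖p.1‖ = R₁ ∨ ‖p.2‖ = r₂ ∨ ‖p.2‖ = R₂) →
      ¬(T₁ p = p.1 ∧ T₂ p = p.2)) :
    ∀ p : X × Y, p.1 ∈ K₁ → p.2 ∈ K₂ → ‖p.1‖ ≤ R₁ → ‖p.2‖ ≤ R₂ →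
      (‖p.1‖ = r₁ ∨ ‖p.1‖ = R₁ ∨ ‖p.2‖ = r₂ ∨ ‖p.2‖ = R₂) →
      ¬(T₁ (ρ₁ p.1, ρ₂ p.2) = p.1 ∧ T₂ (ρ₁ p.1, ρ₂ p.2) = p.2) := by
  intro p hp1 hp2 hpR1 hpR2 hbnd ⟨hf1, hf2⟩
  obtain ⟨hq1K, hq1r, hq1R⟩ :=
    rho_mem hK₁ hh₁ hn₁ hr₁ hR₁ ρ₁ hρ₁lt hρ₁ge hp1 hpR1
  obtain ⟨hq2K, hq2r, hq2R⟩ :=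
    rho_mem hK₂ hh₂ hn₂ hr₂ hR₂ ρ₂ hρ₂lt hρ₂ge hp2 hpR2
  have hqK : (ρ₁ p.1, ρ₂ p.2) ∈ KrR K₁ K₂ r₁ r₂ R₁ R₂ :=
    ⟨hq1K, hq2K, hq1r, hq1R, hq2r, hq2R⟩
  by_cases hc1 : r₁ ≤ ‖p.1‖
  · by_cases hc2 : r₂ ≤ ‖p.2‖
    · -- no projection: p itself is a fixed point of T on K̄_{r,R}
      have he1 : ρ₁ p.1 = p.1 := hρ₁ge p.1 hc1 hpR1
      have he2 : ρ₂ p.2 = p.2 := hρ₂ge p.2 hc2 hpR2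
      rw [he1, he2] at hf1 hf2
      exact hnofix p ⟨hp1, hp2, hc1, hpR1, hc2, hpR2⟩ hbnd
        ⟨by simpa using hf1, by simpa using hf2⟩
    · -- ‖p.2‖ < r₂ : contradict hord₂
      push_neg at hc2
      have he2 : ρ₂ p.2 = (r₂ / ‖p.2 + (r₂ - ‖p.2‖) • h₂‖) • (p.2 + (r₂ - ‖p.2‖) • h₂) :=
        hρ₂lt p.2 hc2
      obtain ⟨-, hnm, hdmem, hdne⟩ := radial_aux hK₂ hh₂ hn₂ hr₂ hp2 hc2
      refine hord₂ (ρ₁ p.1, ρ₂ p.2) hqK (by rw [he2]; exact hnm) ?_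
      rw [hf2]
      rw [he2]
      exact ⟨hdmem, by simpa [sub_eq_zero] using hdne⟩
  · -- ‖p.1‖ < r₁ : contradict hord₁
    push_neg at hc1
    have he1 : ρ₁ p.1 = (r₁ / ‖p.1 + (r₁ - ‖p.1‖) • h₁‖) • (p.1 + (r₁ - ‖p.1‖) • h₁) :=
      hρ₁lt p.1 hc1
    obtain ⟨-, hnm, hdmem, hdne⟩ := radial_aux hK₁ hh₁ hn₁ hr₁ hp1 hc1
    refine hord₁ (ρ₁ p.1, ρ₂ p.2) hqK (by rw [he1]; exact hnm) ?_
    rw [hf1]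
    rw [he1]
    exact ⟨hdmem, by simpa [sub_eq_zero] using hdne⟩
end

section
/- (Existence and uniqueness of the radial shift) Let K be a cone in a normed linear space X such that the norm preserves the order relation ≺ over K, let h ∈ K \ {0} and r > 0. Then for each x ∈ K with ‖x‖ ≤ r there exists a unique t_x ∈ [0, +∞) such that ‖x + t_x h‖ = r; moreover t_x = 0 when ‖x‖ = r. -/
open Set

/- Along the ray `t ↦ x + t • h`, `t ≥ 0`, the points stay in the cone and increase for `≺` as
`t` grows, so order preservation makes `t ↦ ‖x + t • h‖` strictly increasing on `[0, ∞)`. It is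
continuous, starts at `‖x‖ ≤ r` and grows at least like `t ‖h‖ - ‖x‖`, so the intermediate value
theorem gives a solution of `‖x + t • h‖ = r`, and strict monotonicity makes it unique; when
`‖x‖ = r` that solution is `t = 0`. -/

open Filter

namespace IsCone

variable {X : Type*} [NormedAddCommGroup X] [NormedSpace ℝ X] {K : Set X}

theorem smul_mem (hK : IsCone K) {u : X} (hu : u ∈ K) {c : ℝ} (hc : 0 ≤ c) : c • u ∈ K :=
  hK.2.2.2.1 u hu c hc

theorem add_mem (hK : IsCone K) {u v : X} (hu : u ∈ K) (hv : v ∈ K) : u + v ∈ K := by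
  have hmid : (1 / 2 : ℝ) • u + (1 / 2 : ℝ) • v ∈ K :=
    hK.2.2.1 hu hv (by norm_num) (by norm_num) (by norm_num)
  simpa [smul_add, smul_smul] using hK.smul_mem hmid (c := 2) (by norm_num)

theorem strictMonoOn_norm_add_smul (hK : IsCone K)
    (hpres : ∀ x ∈ K, ∀ y ∈ K, y - x ∈ K \ {0} → ‖x‖ < ‖y‖)
    {x h : X} (hx : x ∈ K) (hh : h ∈ K) (hh0 : h ≠ 0) :
    StrictMonoOn (fun t : ℝ => ‖x + t • h‖) (Ici 0) := by
  intro s hs t ht hst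
  have hdiff : (x + t • h) - (x + s • h) = (t - s) • h := by rw [sub_smul]; abel
  refine hpres _ (hK.add_mem hx (hK.smul_mem hh hs)) _ (hK.add_mem hx (hK.smul_mem hh ht)) ?_
  rw [hdiff]
  exact ⟨hK.smul_mem hh (sub_nonneg.2 hst.le), smul_ne_zero (sub_ne_zero.2 hst.ne') hh0⟩

end IsCone

theorem tendsto_norm_add_smul_atTop {X : Type*} [NormedAddCommGroup X] [NormedSpace ℝ X]
    (x : X) {h : X} (hh0 : h ≠ 0) : Tendsto (fun t : ℝ => ‖x + t • h‖) atTop atTop := by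
  have hlin : Tendsto (fun t : ℝ => t * ‖h‖ - ‖x‖) atTop atTop :=
    tendsto_atTop_add_const_right _ _ (tendsto_id.atTop_mul_const (norm_pos_iff.2 hh0))
  refine tendsto_atTop_mono' _ ?_ hlin
  filter_upwards [eventually_ge_atTop 0] with t ht
  calc t * ‖h‖ - ‖x‖ = ‖t • h‖ - ‖x‖ := by rw [norm_smul, Real.norm_of_nonneg ht]
    _ ≤ ‖x + t • h‖ := by
      have := norm_sub_le (x + t • h) x
      rw [add_sub_cancel_left] at this
      linarith

theorem radial_shift_exists_unique_general
    {X : Type*} [NormedAddCommGroup X] [NormedSpace ℝ X]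
    {K : Set X} (hK : IsCone K)
    (hpres : ∀ x ∈ K, ∀ y ∈ K, y - x ∈ K \ {0} → ‖x‖ < ‖y‖)
    {h : X} (hh : h ∈ K) (hh0 : h ≠ 0) {r : ℝ} :
    ∀ x ∈ K, ‖x‖ ≤ r →
      (∃! t : ℝ, 0 ≤ t ∧ ‖x + t • h‖ = r) ∧
      (‖x‖ = r → ∀ t : ℝ, 0 ≤ t → ‖x + t • h‖ = r → t = 0) := by
  intro x hx hxr
  have hmono := hK.strictMonoOn_norm_add_smul hpres hx hh hh0
  have hcont : Continuous fun t : ℝ => ‖x + t • h‖ := by fun_prop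
  obtain ⟨t, ht, hxt⟩ : ∃ t ∈ Ici (0 : ℝ), ‖x + t • h‖ = r :=
    intermediate_value_Ici hcont.continuousOn (tendsto_norm_add_smul_atTop x hh0)
      (by simpa using hxr)
  refine ⟨⟨t, ⟨ht, hxt⟩, fun s hs => hmono.injOn hs.1 ht (hs.2.trans hxt.symm)⟩, ?_⟩
  intro hxr' s hs hsr
  exact hmono.injOn hs (mem_Ici.2 le_rfl) (by simpa [hxr'] using hsr)

theorem radial_shift_exists_unique
    {X : Type*} [NormedAddCommGroup X] [NormedSpace ℝ X]
    {K : Set X} (hK : IsCone K)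
    (hpres : ∀ x ∈ K, ∀ y ∈ K, y - x ∈ K \ {0} → ‖x‖ < ‖y‖)
    {h : X} (hh : h ∈ K) (hh0 : h ≠ 0) {r : ℝ} (hr : 0 < r) :
    ∀ x ∈ K, ‖x‖ ≤ r →
      (∃! t : ℝ, 0 ≤ t ∧ ‖x + t • h‖ = r) ∧
      (‖x‖ = r → ∀ t : ℝ, 0 ≤ t → ‖x + t • h‖ = r → t = 0) :=
  radial_shift_exists_unique_general hK hpres hh hh0
end

section
/- (Continuity of the radial shift) Let K be a cone in a normed linear space X such that the norm preserves the order relation ≺ over K, let h ∈ K \ {0} and r > 0. Let t : {x ∈ K : ‖x‖ ≤ r} → [0, +∞) be the map assigning to each x the unique t(x) ≥ 0 with ‖x + t(x)h‖ = r. Then t is continuous. -/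
open Set Filter Topology

theorem radial_shift_continuous
    {X : Type*} [NormedAddCommGroup X] [NormedSpace ℝ X]
    {K : Set X} (hK : IsCone K)
    (hpres : ∀ x ∈ K, ∀ y ∈ K, y - x ∈ K \ {0} → ‖x‖ < ‖y‖)
    {h : X} (hh : h ∈ K) (hh0 : h ≠ 0) {r : ℝ} (hr : 0 < r)
    (t : X → ℝ)
    (ht : ∀ x ∈ K, ‖x‖ ≤ r → 0 ≤ t x ∧ ‖x + t x • h‖ = r) :
    ContinuousOn t {x | x ∈ K ∧ ‖x‖ ≤ r} := by
  obtain ⟨-, -, hconv, hscal, -⟩ := hK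
  have hadd : ∀ u ∈ K, ∀ v ∈ K, u + v ∈ K := by
    intro u hu v hv
    have hm : (1/2 : ℝ) • u + (1/2 : ℝ) • v ∈ K :=
      hconv hu hv (by norm_num) (by norm_num) (by norm_num)
    have h2 := hscal _ hm 2 (by norm_num)
    have he : u + v = (2:ℝ) • ((1/2 : ℝ) • u + (1/2 : ℝ) • v) := by module
    rw [he]; exact h2
  have hmono : ∀ x ∈ K, ∀ s s' : ℝ, 0 ≤ s → s < s' → ‖x + s • h‖ < ‖x + s' • h‖ := by
    intro x hx s s' hs hss
    apply hpres _ (hadd x hx _ (hscal h hh s hs)) _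
      (hadd x hx _ (hscal h hh s' (hs.trans hss.le)))
    constructor
    · have he : (x + s' • h) - (x + s • h) = (s' - s) • h := by module
      rw [he]; exact hscal h hh _ (by linarith)
    · simp only [Set.mem_singleton_iff]
      intro hc
      have he : (s' - s) • h = 0 := by
        have : (x + s' • h) - (x + s • h) = (s' - s) • h := by module
        rw [← this, hc]
      exact (smul_ne_zero (by intro hz; linarith [sub_eq_zero.mp (by linarith [hz] : s' - s = 0)]) hh0) he
  have huniq : ∀ x ∈ K, ‖x‖ ≤ r → ∀ s : ℝ, 0 ≤ s → ‖x + s • h‖ = r → s = t x := by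
    intro x hx hxr s hs hsr
    obtain ⟨htx0, htxr⟩ := ht x hx hxr
    rcases lt_trichotomy s (t x) with hlt | heq | hgt
    · have := hmono x hx s (t x) hs hlt
      rw [hsr, htxr] at this; exact absurd this (lt_irrefl r)
    · exact heq
    · have := hmono x hx (t x) s htx0 hgt
      rw [hsr, htxr] at this; exact absurd this (lt_irrefl r)
  have hh' : (0:ℝ) < ‖h‖ := norm_pos_iff.mpr hh0
  have hbound : ∀ x ∈ K, ‖x‖ ≤ r → t x ≤ 2 * r / ‖h‖ := by
    intro x hx hxr
    obtain ⟨htx0, htxr⟩ := ht x hx hxr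
    rw [le_div_iff₀ hh']
    have h1 : t x * ‖h‖ = ‖t x • h‖ := by
      rw [norm_smul, Real.norm_of_nonneg htx0]
    have h2 : ‖t x • h‖ ≤ ‖x + t x • h‖ + ‖x‖ := by
      have := norm_sub_le (x + t x • h) x
      simpa using this
    rw [htxr] at h2
    linarith
  intro x hxS
  obtain ⟨hx, hxr⟩ := hxS
  have hxcl : (𝓝[{x | x ∈ K ∧ ‖x‖ ≤ r}] x).NeBot :=
    mem_closure_iff_nhdsWithin_neBot.mp (subset_closure ⟨hx, hxr⟩)
  rw [ContinuousWithinAt]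
  apply Filter.tendsto_of_subseq_tendsto
  intro u hu
  rw [tendsto_nhdsWithin_iff] at hu
  obtain ⟨hux, huS⟩ := hu
  obtain ⟨N, hN⟩ := eventually_atTop.mp huS
  set v : ℕ → X := fun n => u (n + N) with hv
  have hvS : ∀ n, v n ∈ K ∧ ‖v n‖ ≤ r := fun n => hN (n + N) (Nat.le_add_left N n)
  have hvx : Tendsto v atTop (𝓝 x) := hux.comp (tendsto_add_atTop_nat N)
  have hvt : ∀ n, t (v n) ∈ Icc (0:ℝ) (2 * r / ‖h‖) := fun n =>
    ⟨(ht _ (hvS n).1 (hvS n).2).1, hbound _ (hvS n).1 (hvS n).2⟩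
  obtain ⟨s0, hs0mem, φ, hφ, hφt⟩ := isCompact_Icc.tendsto_subseq hvt
  have hvφx : Tendsto (fun n => v (φ n)) atTop (𝓝 x) := hvx.comp hφ.tendsto_atTop
  have hlim : Tendsto (fun n => v (φ n) + t (v (φ n)) • h) atTop (𝓝 (x + s0 • h)) :=
    hvφx.add (hφt.smul_const h)
  have hnorm : Tendsto (fun n => ‖v (φ n) + t (v (φ n)) • h‖) atTop (𝓝 ‖x + s0 • h‖) :=
    hlim.norm
  have hconst : ∀ n, ‖v (φ n) + t (v (φ n)) • h‖ = r := fun n =>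
    (ht _ (hvS (φ n)).1 (hvS (φ n)).2).2
  have hxs0 : ‖x + s0 • h‖ = r := by
    have : Tendsto (fun _ : ℕ => r) atTop (𝓝 ‖x + s0 • h‖) := by
      simpa [hconst] using hnorm
    exact (tendsto_nhds_unique tendsto_const_nhds this).symm
  have hs0 : s0 = t x := huniq x hx hxr s0 hs0mem.1 hxs0
  refine ⟨fun n => φ n + N, ?_⟩
  have : Tendsto (fun n => t (v (φ n))) atTop (𝓝 (t x)) := hs0 ▸ hφt
  exact this
end

section
/- (The shifted map is a retraction) Let K be a cone in a normed linear space X such that the norm preserves the order relation ≺ over K, let h ∈ K \ {0} and 0 < r < R. Define ρ̂ : {x ∈ K : ‖x‖ ≤ R} → {x ∈ K : r ≤ ‖x‖ ≤ R} by ρ̂(x) = x + t(x)h if ‖x‖ < r, where t(x) is the unique t ≥ 0 with ‖x + t h‖ = r, and ρ̂(x) = x if r ≤ ‖x‖ ≤ R. Then ρ̂ is well defined (its values lie in {x ∈ K : r ≤ ‖x‖ ≤ R}), continuous, and equals the identity on {x ∈ K : r ≤ ‖x‖ ≤ R}; that is, ρ̂ is a retraction of {x ∈ K : ‖x‖ ≤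 R} onto {x ∈ K : r ≤ ‖x‖ ≤ R}. -/
open Set

theorem shifted_map_is_retraction
    {X : Type*} [NormedAddCommGroup X] [NormedSpace ℝ X]
    {K : Set X} (hK : IsCone K)
    (hpres : ∀ x ∈ K, ∀ y ∈ K, y - x ∈ K \ {0} → ‖x‖ < ‖y‖)
    {h : X} (hh : h ∈ K) (hh0 : h ≠ 0) {r R : ℝ} (hr : 0 < r) (hrR : r < R)
    (t : X → ℝ)
    (ht : ∀ x ∈ K, ‖x‖ ≤ r → 0 ≤ t x ∧ ‖x + t x • h‖ = r)
    (ρ : X → X)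
    (hρlt : ∀ x ∈ K, ‖x‖ < r → ρ x = x + t x • h)
    (hρge : ∀ x ∈ K, r ≤ ‖x‖ → ‖x‖ ≤ R → ρ x = x) :
    MapsTo ρ {x | x ∈ K ∧ ‖x‖ ≤ R} {x | x ∈ K ∧ r ≤ ‖x‖ ∧ ‖x‖ ≤ R} ∧
    ContinuousOn ρ {x | x ∈ K ∧ ‖x‖ ≤ R} ∧
    EqOn ρ id {x | x ∈ K ∧ r ≤ ‖x‖ ∧ ‖x‖ ≤ R} := by
  obtain ⟨-, hKcl, hconv, hscale, -⟩ := hK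
  -- K is closed under addition
  have hadd : ∀ u ∈ K, ∀ v ∈ K, u + v ∈ K := by
    intro u hu v hv
    have h1 : (1/2 : ℝ) • u + (1/2 : ℝ) • v ∈ K :=
      hconv hu hv (by norm_num) (by norm_num) (by norm_num)
    have h2 := hscale _ h1 2 (by norm_num)
    have : (2:ℝ) • ((1/2 : ℝ) • u + (1/2 : ℝ) • v) = u + v := by
      rw [smul_add, smul_smul, smul_smul]; norm_num
    rwa [this] at h2
  have hmem : ∀ x ∈ K, ∀ s : ℝ, 0 ≤ s → x + s • h ∈ K :=
    fun x hx s hs => hadd x hx _ (hscale h hh s hs)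
  -- strict monotonicity of s ↦ ‖x + s • h‖ on s ≥ 0
  have hmono : ∀ x ∈ K, ∀ s₁ s₂ : ℝ, 0 ≤ s₁ → s₁ < s₂ → ‖x + s₁ • h‖ < ‖x + s₂ • h‖ := by
    intro x hx s₁ s₂ h1 h12
    apply hpres _ (hmem x hx s₁ h1) _ (hmem x hx s₂ (h1.trans h12.le))
    have hdiff : (x + s₂ • h) - (x + s₁ • h) = (s₂ - s₁) • h := by
      rw [sub_smul]; abel
    rw [hdiff]
    exact ⟨hscale h hh _ (by linarith), by
      simp only [mem_singleton_iff]
      exact smul_ne_zero (by intro hc; rw [sub_eq_zero] at hc; linarith) hh0⟩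
  have hmono' : ∀ x ∈ K, ∀ s₁ s₂ : ℝ, 0 ≤ s₁ → s₁ ≤ s₂ → ‖x + s₁ • h‖ ≤ ‖x + s₂ • h‖ := by
    intro x hx s₁ s₂ h1 h12
    rcases h12.lt_or_eq with hlt | rfl
    · exact (hmono x hx _ _ h1 hlt).le
    · exact le_rfl
  have huniq : ∀ x ∈ K, ∀ s₁ s₂ : ℝ, 0 ≤ s₁ → 0 ≤ s₂ → ‖x + s₁ • h‖ = ‖x + s₂ • h‖ → s₁ = s₂ := by
    intro x hx s₁ s₂ h1 h2 he
    by_contra hne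
    rcases lt_or_gt_of_ne hne with hlt | hlt
    · exact absurd he (ne_of_lt (hmono x hx _ _ h1 hlt))
    · exact absurd he.symm (ne_of_lt (hmono x hx _ _ h2 hlt))
  -- t x = 0 on the sphere
  have ht0 : ∀ x ∈ K, ‖x‖ = r → t x = 0 := by
    intro x hx hxr
    obtain ⟨h0, heq⟩ := ht x hx hxr.le
    have : ‖x + (0:ℝ) • h‖ = r := by simpa using hxr
    exact huniq x hx _ _ h0 le_rfl (heq.trans this.symm)
  -- continuity of t on A
  have htcont : ContinuousOn t {x | x ∈ K ∧ ‖x‖ ≤ r} := by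
    rw [Metric.continuousOn_iff]
    intro x hx ε hε
    obtain ⟨htx0, htxr⟩ := ht x hx.1 hx.2
    have hagt : r < ‖x + (t x + ε) • h‖ := htxr ▸ hmono x hx.1 _ _ htx0 (by linarith)
    have hlip : ∀ (s : ℝ) (y : X), |‖y + s • h‖ - ‖x + s • h‖| ≤ dist y x := by
      intro s y
      rw [dist_eq_norm]
      calc |‖y + s • h‖ - ‖x + s • h‖| ≤ ‖(y + s • h) - (x + s • h)‖ :=
            abs_norm_sub_norm_le _ _
        _ = ‖y - x‖ := by rw [add_sub_add_right_eq_sub]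
    by_cases hcase : ε ≤ t x
    · have hblt : ‖x + (t x - ε) • h‖ < r := htxr ▸ hmono x hx.1 _ _ (by linarith) (by linarith)
      refine ⟨min (‖x + (t x + ε) • h‖ - r) (r - ‖x + (t x - ε) • h‖),
        lt_min (by linarith) (by linarith), ?_⟩
      intro y hy hdist
      obtain ⟨hty0, htyr⟩ := ht y hy.1 hy.2
      obtain ⟨hu1, -⟩ := abs_le.mp (hlip (t x + ε) y)
      obtain ⟨-, hu2⟩ := abs_le.mp (hlip (t x - ε) y)
      have hm1 := min_le_left (‖x + (t x + ε) • h‖ - r) (r - ‖x + (t x - ε) • h‖)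
      have hm2 := min_le_right (‖x + (t x + ε) • h‖ - r) (r - ‖x + (t x - ε) • h‖)
      have h1 : r < ‖y + (t x + ε) • h‖ := by linarith
      have h2 : ‖y + (t x - ε) • h‖ < r := by linarith
      have hub : t y < t x + ε := by
        by_contra hc
        push_neg at hc
        have := hmono' y hy.1 _ _ (by linarith) hc
        rw [htyr] at this
        linarith
      have hlb : t x - ε < t y := by
        by_contra hc
        push_neg at hc
        have := hmono' y hy.1 _ _ hty0 hc
        rw [htyr] at this
        linarith
      rw [Real.dist_eq, abs_lt]
      constructor <;> linarith
    · push_neg at hcase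
      refine ⟨‖x + (t x + ε) • h‖ - r, by linarith, ?_⟩
      intro y hy hdist
      obtain ⟨hty0, htyr⟩ := ht y hy.1 hy.2
      obtain ⟨hu1, -⟩ := abs_le.mp (hlip (t x + ε) y)
      have h1 : r < ‖y + (t x + ε) • h‖ := by linarith
      have hub : t y < t x + ε := by
        by_contra hc
        push_neg at hc
        have := hmono' y hy.1 _ _ (by linarith) hc
        rw [htyr] at this
        linarith
      rw [Real.dist_eq, abs_lt]
      constructor <;> linarith
  -- ρ agrees with x + t x • h on A
  have hAeq : EqOn ρ (fun y => y + t y • h) {x | x ∈ K ∧ ‖x‖ ≤ r} := by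
    intro y hy
    rcases hy.2.lt_or_eq with hlt | heq
    · exact hρlt y hy.1 hlt
    · have := ht0 y hy.1 heq
      rw [hρge y hy.1 heq.ge (by linarith)]
      simp [this]
  have hAcl : IsClosed {x | x ∈ K ∧ ‖x‖ ≤ r} := by
    have : {x | x ∈ K ∧ ‖x‖ ≤ r} = K ∩ (Metric.closedBall 0 r) := by
      ext z; simp [mem_closedBall_zero_iff]
    rw [this]; exact hKcl.inter Metric.isClosed_closedBall
  have hBcl : IsClosed {x | x ∈ K ∧ r ≤ ‖x‖ ∧ ‖x‖ ≤ R} := by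
    have : {x | x ∈ K ∧ r ≤ ‖x‖ ∧ ‖x‖ ≤ R} =
        K ∩ ({x | r ≤ ‖x‖} ∩ Metric.closedBall 0 R) := by
      ext z; simp [mem_closedBall_zero_iff]; tauto
    rw [this]
    exact hKcl.inter ((isClosed_le continuous_const continuous_norm).inter Metric.isClosed_closedBall)
  have hAcont : ContinuousOn ρ {x | x ∈ K ∧ ‖x‖ ≤ r} :=
    (continuousOn_id.add (htcont.smul continuousOn_const)).congr hAeq
  have hBcont : ContinuousOn ρ {x | x ∈ K ∧ r ≤ ‖x‖ ∧ ‖x‖ ≤ R} :=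
    continuousOn_id.congr (fun y hy => hρge y hy.1 hy.2.1 hy.2.2)
  refine ⟨?_, ?_, ?_⟩
  · intro x hx
    rcases lt_or_ge ‖x‖ r with hlt | hge
    · rw [hρlt x hx.1 hlt]
      obtain ⟨h0, heq⟩ := ht x hx.1 hlt.le
      exact ⟨hmem x hx.1 _ h0, heq.ge, heq.le.trans hrR.le⟩
    · rw [hρge x hx.1 hge hx.2]
      exact ⟨hx.1, hge, hx.2⟩
  · intro x hx
    have hsub : {x | x ∈ K ∧ ‖x‖ ≤ R} ⊆
        {x | x ∈ K ∧ ‖x‖ ≤ r} ∪ {x | x ∈ K ∧ r ≤ ‖x‖ ∧ ‖x‖ ≤ R} := by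
      intro z hz
      rcases le_or_gt ‖z‖ r with hc | hc
      · exact Or.inl ⟨hz.1, hc⟩
      · exact Or.inr ⟨hz.1, hc.le, hz.2⟩
    have cA : ContinuousWithinAt ρ {x | x ∈ K ∧ ‖x‖ ≤ r} x := by
      by_cases hxA : x ∈ {x | x ∈ K ∧ ‖x‖ ≤ r}
      · exact hAcont x hxA
      · exact continuousWithinAt_of_notMem_closure (by rwa [hAcl.closure_eq])
    have cB : ContinuousWithinAt ρ {x | x ∈ K ∧ r ≤ ‖x‖ ∧ ‖x‖ ≤ R} x := by
      by_cases hxB : x ∈ {x | x ∈ K ∧ r ≤ ‖x‖ ∧ ‖x‖ ≤ R}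
      · exact hBcont x hxB
      · exact continuousWithinAt_of_notMem_closure (by rwa [hBcl.closure_eq])
    exact (cA.union cB).mono hsub
  · intro x hx
    exact hρge x hx.1 hx.2.1 hx.2.2
end

section
/- (No new fixed points of the shifted-retraction extension) Let K₁, K₂ be cones in normed linear spaces X, Y whose norms preserve the respective order relations ≺ᵢ over Kᵢ, let K = K₁ × K₂ and r = (r₁,r₂), R = (R₁,R₂) with 0 < rᵢ < Rᵢ. Let T = (T₁,T₂) : K̄_{r,R} → K be a compact map such that for each i ∈ {1,2} there exists hᵢ ∈ Kᵢ \ {0} with: xᵢ ≠ Tᵢx + μhᵢ for all x ∈ K̄_{r,R} with ‖xᵢ‖ = rᵢ and all μ > 0. For i = 1,2 define ρ̂ᵢ on {xᵢ ∈ Kᵢ : ‖xᵢ‖ ≤ Rᵢ} by ρ̂ᵢ(xᵢ) = xᵢ + tᵢ(xᵢ)hᵢ if ‖xᵢ‖ < rᵢ (where tᵢ(xᵢ) is the unique t ≥ 0 with ‖xᵢ + t hᵢ‖ = rᵢ) and ρ̂ᵢ(xᵢ) = xᵢ if rᵢ ≤ ‖xᵢ‖ ≤ Rᵢ, and set ρ̂(x)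 = (ρ̂₁(x₁), ρ̂₂(x₂)). If T has no fixed point x ∈ K̄_{r,R} with ‖xᵢ‖ = rᵢ or ‖xᵢ‖ = Rᵢ for some i, then N := T ∘ ρ̂ has no fixed point x = (x₁,x₂) ∈ K̄_R with ‖xᵢ‖ = rᵢ or ‖xᵢ‖ = Rᵢ for some i ∈ {1,2}. -/
open Set

/-- The set `K̄_{r,R} = {(x₁,x₂) ∈ K₁ × K₂ : rᵢ ≤ ‖xᵢ‖ ≤ Rᵢ}`. -/
lemma IsCone.add_mem_s9 {X : Type*} [NormedAddCommGroup X] [NormedSpace ℝ X] {K : Set X}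
    (h : IsCone K) {u v : X} (hu : u ∈ K) (hv : v ∈ K) : u + v ∈ K := by
  obtain ⟨-, -, hconv, hscale, -⟩ := h
  have hm : (1/2 : ℝ) • u + (1/2 : ℝ) • v ∈ K :=
    hconv hu hv (by norm_num) (by norm_num) (by norm_num)
  have h2 := hscale _ hm 2 (by norm_num)
  have : (2 : ℝ) • ((1/2 : ℝ) • u + (1/2 : ℝ) • v) = u + v := by
    rw [smul_add, smul_smul, smul_smul]; norm_num
  rwa [this] at h2

theorem no_new_fixed_points_shifted_extension
    {X Y : Type*} [NormedAddCommGroup X] [NormedSpace ℝ X]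
    [NormedAddCommGroup Y] [NormedSpace ℝ Y]
    {K₁ : Set X} {K₂ : Set Y} (hK₁ : IsCone K₁) (hK₂ : IsCone K₂)
    (hpres₁ : ∀ x ∈ K₁, ∀ y ∈ K₁, y - x ∈ K₁ \ {0} → ‖x‖ < ‖y‖)
    (hpres₂ : ∀ x ∈ K₂, ∀ y ∈ K₂, y - x ∈ K₂ \ {0} → ‖x‖ < ‖y‖)
    {r₁ r₂ R₁ R₂ : ℝ} (hr₁ : 0 < r₁) (hR₁ : r₁ < R₁) (hr₂ : 0 < r₂) (hR₂ : r₂ < R₂)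
    (h₁ : X) (h₂ : Y) (hh₁ : h₁ ∈ K₁ ∧ h₁ ≠ 0) (hh₂ : h₂ ∈ K₂ ∧ h₂ ≠ 0)
    (t₁ : X → ℝ) (t₂ : Y → ℝ)
    (ht₁ : ∀ x ∈ K₁, ‖x‖ ≤ r₁ → 0 ≤ t₁ x ∧ ‖x + t₁ x • h₁‖ = r₁)
    (ht₂ : ∀ x ∈ K₂, ‖x‖ ≤ r₂ → 0 ≤ t₂ x ∧ ‖x + t₂ x • h₂‖ = r₂)
    (ρ₁ : X → X) (ρ₂ : Y → Y)
    (hρ₁lt : ∀ x ∈ K₁, ‖x‖ < r₁ → ρ₁ x = x + t₁ x • h₁)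
    (hρ₁ge : ∀ x ∈ K₁, r₁ ≤ ‖x‖ → ‖x‖ ≤ R₁ → ρ₁ x = x)
    (hρ₂lt : ∀ x ∈ K₂, ‖x‖ < r₂ → ρ₂ x = x + t₂ x • h₂)
    (hρ₂ge : ∀ x ∈ K₂, r₂ ≤ ‖x‖ → ‖x‖ ≤ R₂ → ρ₂ x = x)
    (T₁ : X × Y → X) (T₂ : X × Y → Y)
    (hmap : ∀ p ∈ KrR K₁ K₂ r₁ r₂ R₁ R₂, T₁ p ∈ K₁ ∧ T₂ p ∈ K₂)
    (hcont : ContinuousOn (fun p => (T₁ p, T₂ p)) (KrR K₁ K₂ r₁ r₂ R₁ R₂))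
    (hcpt : IsCompact (closure ((fun p => (T₁ p, T₂ p)) '' (KrR K₁ K₂ r₁ r₂ R₁ R₂))))
    (hcomp₁ : ∀ p ∈ KrR K₁ K₂ r₁ r₂ R₁ R₂, ‖p.1‖ = r₁ →
      ∀ μ : ℝ, 0 < μ → p.1 ≠ T₁ p + μ • h₁)
    (hcomp₂ : ∀ p ∈ KrR K₁ K₂ r₁ r₂ R₁ R₂, ‖p.2‖ = r₂ →
      ∀ μ : ℝ, 0 < μ → p.2 ≠ T₂ p + μ • h₂)
    (hnofix : ∀ p ∈ KrR K₁ K₂ r₁ r₂ R₁ R₂,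
      (‖p.1‖ = r₁ ∨ ‖p.1‖ = R₁ ∨ ‖p.2‖ = r₂ ∨ ‖p.2‖ = R₂) →
      ¬(T₁ p = p.1 ∧ T₂ p = p.2)) :
    ∀ p : X × Y, p.1 ∈ K₁ → p.2 ∈ K₂ → ‖p.1‖ ≤ R₁ → ‖p.2‖ ≤ R₂ →
      (‖p.1‖ = r₁ ∨ ‖p.1‖ = R₁ ∨ ‖p.2‖ = r₂ ∨ ‖p.2‖ = R₂) →
      ¬(T₁ (ρ₁ p.1, ρ₂ p.2) = p.1 ∧ T₂ (ρ₁ p.1, ρ₂ p.2) = p.2) := by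
  rintro p hp1 hp2 hpR1 hpR2 hbd ⟨e1, e2⟩
  set q : X × Y := (ρ₁ p.1, ρ₂ p.2) with hq
  -- properties of ρ₁ p.1
  have key1 : ρ₁ p.1 ∈ K₁ ∧ r₁ ≤ ‖ρ₁ p.1‖ ∧ ‖ρ₁ p.1‖ ≤ R₁ := by
    by_cases h1 : r₁ ≤ ‖p.1‖
    · rw [hρ₁ge _ hp1 h1 hpR1]; exact ⟨hp1, h1, hpR1⟩
    · push_neg at h1
      obtain ⟨ht0, htn⟩ := ht₁ p.1 hp1 h1.le
      rw [hρ₁lt _ hp1 h1]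
      refine ⟨hK₁.add_mem_s9 hp1 (hK₁.2.2.2.1 _ hh₁.1 _ ht0), ?_, ?_⟩
      · rw [htn]
      · rw [htn]; exact hR₁.le
  have key2 : ρ₂ p.2 ∈ K₂ ∧ r₂ ≤ ‖ρ₂ p.2‖ ∧ ‖ρ₂ p.2‖ ≤ R₂ := by
    by_cases h2 : r₂ ≤ ‖p.2‖
    · rw [hρ₂ge _ hp2 h2 hpR2]; exact ⟨hp2, h2, hpR2⟩
    · push_neg at h2
      obtain ⟨ht0, htn⟩ := ht₂ p.2 hp2 h2.le
      rw [hρ₂lt _ hp2 h2]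
      refine ⟨hK₂.add_mem_s9 hp2 (hK₂.2.2.2.1 _ hh₂.1 _ ht0), ?_, ?_⟩
      · rw [htn]
      · rw [htn]; exact hR₂.le
  have hqmem : q ∈ KrR K₁ K₂ r₁ r₂ R₁ R₂ :=
    ⟨key1.1, key2.1, key1.2.1, key1.2.2, key2.2.1, key2.2.2⟩
  by_cases h1 : r₁ ≤ ‖p.1‖
  · by_cases h2 : r₂ ≤ ‖p.2‖
    · have hq1 : ρ₁ p.1 = p.1 := hρ₁ge _ hp1 h1 hpR1
      have hq2 : ρ₂ p.2 = p.2 := hρ₂ge _ hp2 h2 hpR2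
      have hpmem : p ∈ KrR K₁ K₂ r₁ r₂ R₁ R₂ := ⟨hp1, hp2, h1, hpR1, h2, hpR2⟩
      refine hnofix p hpmem hbd ⟨?_, ?_⟩
      · rw [← e1, hq]; simp [hq1, hq2]
      · rw [← e2, hq]; simp [hq1, hq2]
    · push_neg at h2
      obtain ⟨ht0, htn⟩ := ht₂ p.2 hp2 h2.le
      have htpos : 0 < t₂ p.2 := by
        rcases ht0.lt_or_eq with h | h
        · exact h
        · exfalso; rw [← h] at htn; simp at htn; exact absurd htn h2.ne
      have hq2 : ρ₂ p.2 = p.2 + t₂ p.2 • h₂ := hρ₂lt _ hp2 h2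
      refine hcomp₂ q hqmem (by rw [hq]; simpa [hq2] using htn) (t₂ p.2) htpos ?_
      show ρ₂ p.2 = T₂ q + t₂ p.2 • h₂
      rw [hq2, e2]
  · push_neg at h1
    obtain ⟨ht0, htn⟩ := ht₁ p.1 hp1 h1.le
    have htpos : 0 < t₁ p.1 := by
      rcases ht0.lt_or_eq with h | h
      · exact h
      · exfalso; rw [← h] at htn; simp at htn; exact absurd htn h1.ne
    have hq1 : ρ₁ p.1 = p.1 + t₁ p.1 • h₁ := hρ₁lt _ hp1 h1
    refine hcomp₁ q hqmem (by rw [hq]; simpa [hq1] using htn) (t₁ p.1) htpos ?_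
    show ρ₁ p.1 = T₁ q + t₁ p.1 • h₁
    rw [hq1, e1]
end

section
/- (Boundary condition at small radius from sublinear growth at zero) Let μ₁ = π²/4 and h(t) = cos(πt/2) for t ∈ [0,1], and let G(t,s) = 1 − t if 0 ≤ s ≤ t ≤ 1 and G(t,s) = 1 − s if 0 ≤ t < s ≤ 1. Let f : [0,1] × [0,∞) × [0,∞) → [0,∞) be continuous and suppose there exist ε > 0 and δ > 0 such that f(t, x₁, x₂) ≥ (μ₁ + ε)·x₁ for all x₁ ∈ [0, δ], all x₂ ≥ 0 and all t ∈ [0,1]. Then for every r ∈ (0, δ), there do not exist continuous functions x₁, x₂ : [0,1] → [0,∞) with ‖x₁‖_∞ = r and a number μ > 0 such that x₁(t) = ∫_0^1 G(t,s) f(s, x₁(s), x₂(s)) ds + μ·h(t) for all t ∈ [0,1]. -/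
/-! `h(t) = cos (π t / 2)` is an eigenfunction of the Green operator, with eigenvalue `4 / π²`.
If `x₁` solves the equation with `x₁ ≤ r < δ`, then `f(s, x₁, x₂) ≥ (π²/4 + ε) x₁`, so the
Green operator applied to `f` dominates `(1 + 4ε/π²) ≥ 1` times the Green operator applied to
`x₁`. Hence a lower bound `x₁ ≥ c h` improves to `x₁ ≥ (c + μ) h`, and by induction
`x₁ ≥ n μ h` for every `n`; at `t = 0` this contradicts `x₁(0) ≤ r`. -/

open Set MeasureTheory intervalIntegral Real

lemma hasDerivAt_sin_pi_mul_div_two (s : ℝ) :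
    HasDerivAt (fun s => 2 / π * sin (π * s / 2)) (cos (π * s / 2)) s := by
  have hlin : HasDerivAt (fun s : ℝ => π * s / 2) (π / 2) s := by
    simpa using ((hasDerivAt_id s).const_mul π).div_const 2
  refine (((hasDerivAt_sin _).comp s hlin).const_mul (2 / π)).congr_deriv ?_
  field_simp [pi_ne_zero]

lemma hasDerivAt_one_sub_mul_sin_sub_cos (s : ℝ) :
    HasDerivAt (fun s => (1 - s) * (2 / π * sin (π * s / 2)) - 4 / π ^ 2 * cos (π * s / 2))
      ((1 - s) * cos (π * s / 2)) s := by
  have hlin : HasDerivAt (fun s : ℝ => π * s / 2) (π / 2) s := by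
    simpa using ((hasDerivAt_id s).const_mul π).div_const 2
  have hcos := ((hasDerivAt_cos _).comp s hlin).const_mul (4 / π ^ 2)
  refine ((((hasDerivAt_id s).const_sub 1).mul (hasDerivAt_sin_pi_mul_div_two s)).sub
    hcos).congr_deriv ?_
  simp only [id]
  field_simp [pi_ne_zero]
  ring

lemma integral_cos_pi_mul_div_two (t : ℝ) :
    ∫ s in (0 : ℝ)..t, cos (π * s / 2) = 2 / π * sin (π * t / 2) := by
  rw [integral_eq_sub_of_hasDerivAt (fun s _ => hasDerivAt_sin_pi_mul_div_two s)
    (Continuous.intervalIntegrable (by fun_prop) _ _)]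
  simp

lemma integral_one_sub_mul_cos_pi_mul_div_two (t : ℝ) :
    ∫ s in t..1, (1 - s) * cos (π * s / 2)
      = 4 / π ^ 2 * cos (π * t / 2) - (1 - t) * (2 / π * sin (π * t / 2)) := by
  rw [integral_eq_sub_of_hasDerivAt (fun s _ => hasDerivAt_one_sub_mul_sin_sub_cos s)
    (Continuous.intervalIntegrable (by fun_prop) _ _)]
  simp

lemma integral_one_sub_max_mul_cos {t : ℝ} (ht : t ∈ Icc (0 : ℝ) 1) :
    ∫ s in (0 : ℝ)..1, (1 - max t s) * cos (π * s / 2) = 4 / π ^ 2 * cos (π * t / 2) := by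
  have hcont : Continuous fun s => (1 - max t s) * cos (π * s / 2) := by fun_prop
  rw [← integral_add_adjacent_intervals (b := t) (hcont.intervalIntegrable _ _)
    (hcont.intervalIntegrable _ _)]
  have hleft : ∫ s in (0 : ℝ)..t, (1 - max t s) * cos (π * s / 2)
      = ∫ s in (0 : ℝ)..t, (1 - t) * cos (π * s / 2) := by
    refine integral_congr fun s hs => ?_
    rw [uIcc_of_le ht.1] at hs
    simp [max_eq_left hs.2]
  have hright : ∫ s in t..1, (1 - max t s) * cos (π * s / 2)
      = ∫ s in t..1, (1 - s) * cos (π * s / 2) := by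
    refine integral_congr fun s hs => ?_
    rw [uIcc_of_le ht.2] at hs
    simp [max_eq_right hs.1]
  rw [hleft, hright, intervalIntegral.integral_const_mul, integral_cos_pi_mul_div_two,
    integral_one_sub_mul_cos_pi_mul_div_two]
  ring

lemma green_eq_one_sub_max {G : ℝ → ℝ → ℝ}
    (hG : ∀ t ∈ Icc (0 : ℝ) 1, ∀ s ∈ Icc (0 : ℝ) 1,
      (s ≤ t → G t s = 1 - t) ∧ (t < s → G t s = 1 - s))
    {t s : ℝ} (ht : t ∈ Icc (0 : ℝ) 1) (hs : s ∈ Icc (0 : ℝ) 1) : G t s = 1 - max t s := by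
  rcases le_or_gt s t with hst | hts
  · rw [(hG t ht s hs).1 hst, max_eq_left hst]
  · rw [(hG t ht s hs).2 hts, max_eq_right hts.le]

lemma cos_pi_mul_div_two_nonneg {t : ℝ} (ht : t ∈ Icc (0 : ℝ) 1) : 0 ≤ cos (π * t / 2) :=
  cos_nonneg_of_mem_Icc ⟨by nlinarith [pi_pos, ht.1], by nlinarith [pi_pos, ht.2]⟩

section Supersolution

variable {K : ℝ → ℝ → ℝ} {F x h : ℝ → ℝ} {κ l μ : ℝ}

lemma add_mul_le_of_mul_le_of_eq_integral_add
    (hK : ∀ t ∈ Icc (0 : ℝ) 1, ∀ s ∈ Icc (0 : ℝ) 1, 0 ≤ K t s)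
    (hKc : ∀ t ∈ Icc (0 : ℝ) 1, ContinuousOn (K t) (Icc 0 1))
    (hFc : ContinuousOn F (Icc 0 1)) (hhc : ContinuousOn h (Icc 0 1))
    (hh : ∀ t ∈ Icc (0 : ℝ) 1, 0 ≤ h t)
    (hKh : ∀ t ∈ Icc (0 : ℝ) 1, ∫ s in (0 : ℝ)..1, K t s * h s = κ * h t)
    (hl : 0 ≤ l) (hlκ : 1 ≤ l * κ) (hF : ∀ s ∈ Icc (0 : ℝ) 1, l * x s ≤ F s)
    (hx : ∀ t ∈ Icc (0 : ℝ) 1, x t = (∫ s in (0 : ℝ)..1, K t s * F s) + μ * h t)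
    {c : ℝ} (hc : 0 ≤ c) (hcx : ∀ s ∈ Icc (0 : ℝ) 1, c * h s ≤ x s) :
    ∀ t ∈ Icc (0 : ℝ) 1, (c + μ) * h t ≤ x t := by
  intro t ht
  have hmono : ∫ s in (0 : ℝ)..1, l * c * (K t s * h s) ≤ ∫ s in (0 : ℝ)..1, K t s * F s := by
    refine integral_mono_on zero_le_one
      ((((hKc t ht).mul hhc).const_smul (l * c)).intervalIntegrable_of_Icc zero_le_one)
      (((hKc t ht).mul hFc).intervalIntegrable_of_Icc zero_le_one) fun s hs => ?_
    calc l * c * (K t s * h s) = K t s * (l * (c * h s)) := by ring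
      _ ≤ K t s * F s :=
        mul_le_mul_of_nonneg_left ((mul_le_mul_of_nonneg_left (hcx s hs) hl).trans (hF s hs))
          (hK t ht s hs)
  rw [intervalIntegral.integral_const_mul, hKh t ht] at hmono
  have hch : c * h t ≤ l * c * (κ * h t) := by
    nlinarith [mul_nonneg hc (hh t ht)]
  rw [hx t ht]
  linarith

lemma nat_mul_mul_le_of_eq_integral_add
    (hK : ∀ t ∈ Icc (0 : ℝ) 1, ∀ s ∈ Icc (0 : ℝ) 1, 0 ≤ K t s)
    (hKc : ∀ t ∈ Icc (0 : ℝ) 1, ContinuousOn (K t) (Icc 0 1))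
    (hFc : ContinuousOn F (Icc 0 1)) (hhc : ContinuousOn h (Icc 0 1))
    (hh : ∀ t ∈ Icc (0 : ℝ) 1, 0 ≤ h t)
    (hKh : ∀ t ∈ Icc (0 : ℝ) 1, ∫ s in (0 : ℝ)..1, K t s * h s = κ * h t)
    (hl : 0 ≤ l) (hlκ : 1 ≤ l * κ) (hF : ∀ s ∈ Icc (0 : ℝ) 1, l * x s ≤ F s)
    (hx : ∀ t ∈ Icc (0 : ℝ) 1, x t = (∫ s in (0 : ℝ)..1, K t s * F s) + μ * h t)
    (hx0 : ∀ t ∈ Icc (0 : ℝ) 1, 0 ≤ x t) (hμ : 0 ≤ μ) (n : ℕ) :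
    ∀ t ∈ Icc (0 : ℝ) 1, n * μ * h t ≤ x t := by
  induction n with
  | zero => simpa using hx0
  | succ n ih =>
    intro t ht
    have := add_mul_le_of_mul_le_of_eq_integral_add hK hKc hFc hhc hh hKh hl hlκ hF hx
      (by positivity) ih t ht
    push_cast
    linarith

end Supersolution

theorem no_solution_at_small_radius_general
    (G : ℝ → ℝ → ℝ)
    (hG : ∀ t ∈ Set.Icc (0:ℝ) 1, ∀ s ∈ Set.Icc (0:ℝ) 1,
      (s ≤ t → G t s = 1 - t) ∧ (t < s → G t s = 1 - s))
    (f : ℝ → ℝ → ℝ → ℝ)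
    (hf : ContinuousOn (fun p : ℝ × ℝ × ℝ => f p.1 p.2.1 p.2.2)
      (Set.Icc 0 1 ×ˢ Set.Ici 0 ×ˢ Set.Ici 0))
    (ε δ : ℝ) (hε : 0 < ε)
    (hgrow : ∀ t ∈ Set.Icc (0:ℝ) 1, ∀ u ∈ Set.Icc (0:ℝ) δ, ∀ v ∈ Set.Ici (0:ℝ),
      (π ^ 2 / 4 + ε) * u ≤ f t u v)
    (r : ℝ) (hrδ : r < δ) :
    ¬ ∃ (x₁ x₂ : ℝ → ℝ) (μ : ℝ),
      ContinuousOn x₁ (Set.Icc 0 1) ∧ ContinuousOn x₂ (Set.Icc 0 1) ∧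
      (∀ t ∈ Set.Icc (0:ℝ) 1, 0 ≤ x₁ t) ∧ (∀ t ∈ Set.Icc (0:ℝ) 1, 0 ≤ x₂ t) ∧
      sSup ((fun t => |x₁ t|) '' Set.Icc (0:ℝ) 1) = r ∧ 0 < μ ∧
      ∀ t ∈ Set.Icc (0:ℝ) 1,
        x₁ t = (∫ s in (0:ℝ)..1, G t s * f s (x₁ s) (x₂ s))
          + μ * Real.cos (π * t / 2) := by
  rintro ⟨x₁, x₂, μ, hx₁c, hx₂c, hx₁0, hx₂0, hsup, hμ, heq⟩
  have hle : ∀ t ∈ Icc (0 : ℝ) 1, x₁ t ≤ r := fun t ht =>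
    (le_abs_self _).trans <| hsup ▸
      le_csSup (isCompact_Icc.image_of_continuousOn hx₁c.abs).bddAbove ⟨t, ht, rfl⟩
  have hFc : ContinuousOn (fun s => f s (x₁ s) (x₂ s)) (Icc 0 1) :=
    hf.comp (continuousOn_id.prodMk (hx₁c.prodMk hx₂c)) fun s hs =>
      ⟨hs, hx₁0 s hs, hx₂0 s hs⟩
  have hF : ∀ s ∈ Icc (0 : ℝ) 1, (π ^ 2 / 4 + ε) * x₁ s ≤ f s (x₁ s) (x₂ s) := fun s hs =>
    hgrow s hs _ ⟨hx₁0 s hs, (hle s hs).trans hrδ.le⟩ _ (hx₂0 s hs)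
  have hx : ∀ t ∈ Icc (0 : ℝ) 1, x₁ t =
      (∫ s in (0 : ℝ)..1, (1 - max t s) * f s (x₁ s) (x₂ s)) + μ * cos (π * t / 2) := by
    intro t ht
    rw [heq t ht, integral_congr fun s hs => ?_]
    rw [uIcc_of_le zero_le_one] at hs
    simp only [green_eq_one_sub_max hG ht hs]
  have hlκ : 1 ≤ (π ^ 2 / 4 + ε) * (4 / π ^ 2) := by
    have hπ : 0 < π ^ 2 := by positivity
    rw [add_mul, div_mul_div_cancel₀ four_ne_zero, div_self hπ.ne']
    have : 0 < ε * (4 / π ^ 2) := by positivity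
    linarith
  obtain ⟨n, hn⟩ := exists_nat_gt (r / μ)
  have hbound := nat_mul_mul_le_of_eq_integral_add (K := fun t s => 1 - max t s)
    (fun t ht s hs => sub_nonneg.2 (max_le ht.2 hs.2)) (fun t _ => by fun_prop) hFc
    (by fun_prop) (fun t ht => cos_pi_mul_div_two_nonneg ht)
    (fun t ht => integral_one_sub_max_mul_cos ht) (by positivity) hlκ hF hx hx₁0 hμ.le n 0
    (left_mem_Icc.2 zero_le_one)
  rw [mul_zero, zero_div, cos_zero, mul_one] at hbound
  rw [div_lt_iff₀ hμ] at hn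
  linarith [hle 0 (left_mem_Icc.2 zero_le_one)]

theorem no_solution_at_small_radius
    (G : ℝ → ℝ → ℝ)
    (hG : ∀ t ∈ Set.Icc (0:ℝ) 1, ∀ s ∈ Set.Icc (0:ℝ) 1,
      (s ≤ t → G t s = 1 - t) ∧ (t < s → G t s = 1 - s))
    (f : ℝ → ℝ → ℝ → ℝ)
    (hf : ContinuousOn (fun p : ℝ × ℝ × ℝ => f p.1 p.2.1 p.2.2)
      (Set.Icc 0 1 ×ˢ Set.Ici 0 ×ˢ Set.Ici 0))
    (hfpos : ∀ t ∈ Set.Icc (0:ℝ) 1, ∀ u ∈ Set.Ici (0:ℝ), ∀ v ∈ Set.Ici (0:ℝ),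
      0 ≤ f t u v)
    (ε δ : ℝ) (hε : 0 < ε) (hδ : 0 < δ)
    (hgrow : ∀ t ∈ Set.Icc (0:ℝ) 1, ∀ u ∈ Set.Icc (0:ℝ) δ, ∀ v ∈ Set.Ici (0:ℝ),
      (π ^ 2 / 4 + ε) * u ≤ f t u v)
    (r : ℝ) (hr0 : 0 < r) (hrδ : r < δ) :
    ¬ ∃ (x₁ x₂ : ℝ → ℝ) (μ : ℝ),
      ContinuousOn x₁ (Set.Icc 0 1) ∧ ContinuousOn x₂ (Set.Icc 0 1) ∧
      (∀ t ∈ Set.Icc (0:ℝ) 1, 0 ≤ x₁ t) ∧ (∀ t ∈ Set.Icc (0:ℝ) 1, 0 ≤ x₂ t) ∧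
      sSup ((fun t => |x₁ t|) '' Set.Icc (0:ℝ) 1) = r ∧ 0 < μ ∧
      ∀ t ∈ Set.Icc (0:ℝ) 1,
        x₁ t = (∫ s in (0:ℝ)..1, G t s * f s (x₁ s) (x₂ s))
          + μ * Real.cos (π * t / 2) :=
  no_solution_at_small_radius_general G hG f hf ε δ hε hgrow r hrδ
end

section
/- (Concrete system with a coexistence positive solution) There exist twice continuously differentiable functions x, y : [0,1] → [0,∞), neither identically zero, such that for all t ∈ [0,1]: x''(t) + (t+1)/(y(t)+1) + x(t)·arctan(x(t)) = 0, y''(t) + t/(e^{−x(t)} + 1) + (1/3)·√(y(t)) = 0, and x'(0) = x(1) = y'(0) = y(1) = 0. -/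
open Set Real

/-!
Integrating twice, `u'' = -f`, `u'(0) = u(1) = 0` is solved by
`u t = ∫ σ in t..1, ∫ s in 0..σ, f s`. In the unknowns `x` and `Y = 6 y` the system becomes a
fixed-point problem for this solution operator, and Banach's theorem applies on the closed set of
continuous pairs with `0 ≤ x ≤ 3/2` and `(1 - t)/2 ≤ Y ≤ 6`. The set is invariant because the
right-hand sides lie between affine functions of `t` (e.g. `rhsY ≥ 3 t`, whence
`Y ≥ (1 - t^3)/2`); the same bounds give `x 0 ≥ 1/3` and `Y 0 ≥ 1/2`. On this set the
right-hand sides are Lipschitz in `(x, Y)` with a weight `w t` whose solution at `0` is at most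
`9/10`; for `√Y` the weight grows like `(1 - t)^(-1/2)` near `t = 1`, which is still integrable.
-/

open MeasureTheory intervalIntegral

noncomputable section

/-- The solution of `u'' = -f` with `u'(0) = 0` and `u(1) = 0`. -/
def greenSolution (f : ℝ → ℝ) (t : ℝ) : ℝ := ∫ σ in t..1, ∫ s in 0..σ, f s

section Calculus

variable {f : ℝ → ℝ}

theorem hasDerivAt_greenSolution (hf : Continuous f) (t : ℝ) :
    HasDerivAt (greenSolution f) (-∫ s in 0..t, f s) t := by
  have hF : Continuous fun σ => ∫ s in 0..σ, f s :=
    continuous_primitive (fun _ _ => hf.intervalIntegrable _ _) 0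
  have h := (hF.integral_hasStrictDerivAt 1 t).hasDerivAt.neg
  refine h.congr_of_eventuallyEq (Filter.Eventually.of_forall fun t => ?_)
  simp only [greenSolution, Pi.neg_apply, integral_symm 1 t]

theorem hasDerivAt_neg_primitive (hf : Continuous f) (t : ℝ) :
    HasDerivAt (fun t => -∫ s in 0..t, f s) (-f t) t :=
  (hf.integral_hasStrictDerivAt 0 t).hasDerivAt.neg

theorem deriv_greenSolution (hf : Continuous f) :
    deriv (greenSolution f) = fun t => -∫ s in 0..t, f s :=
  funext fun t => (hasDerivAt_greenSolution hf t).deriv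

theorem deriv_deriv_greenSolution (hf : Continuous f) :
    deriv (deriv (greenSolution f)) = -f := by
  rw [deriv_greenSolution hf]
  exact funext fun t => (hasDerivAt_neg_primitive hf t).deriv

theorem contDiff_greenSolution (hf : Continuous f) : ContDiff ℝ 2 (greenSolution f) := by
  rw [show (2 : WithTop ℕ∞) = 1 + 1 from rfl, contDiff_succ_iff_deriv]
  refine ⟨fun t => (hasDerivAt_greenSolution hf t).differentiableAt, by simp,
    contDiff_one_iff_deriv.2 ⟨?_, ?_⟩⟩
  · rw [deriv_greenSolution hf]
    exact fun t => (hasDerivAt_neg_primitive hf t).differentiableAt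
  · rw [deriv_deriv_greenSolution hf]
    exact hf.neg

theorem iteratedDerivWithin_two_greenSolution (hf : Continuous f) {s : Set ℝ}
    (hs : UniqueDiffOn ℝ s) {t : ℝ} (ht : t ∈ s) :
    iteratedDerivWithin 2 (greenSolution f) s t = -f t := by
  rw [iteratedDerivWithin_eq_iteratedDeriv hs (contDiff_greenSolution hf).contDiffAt ht,
    iteratedDeriv_succ, iteratedDeriv_one, deriv_deriv_greenSolution hf, Pi.neg_apply]

theorem derivWithin_greenSolution_zero (hf : Continuous f) {s : Set ℝ}
    (hs : UniqueDiffWithinAt ℝ s 0) : derivWithin (greenSolution f) s 0 = 0 := by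
  rw [(hasDerivAt_greenSolution hf 0).hasDerivWithinAt.derivWithin hs, integral_same, neg_zero]

theorem greenSolution_one (f : ℝ → ℝ) : greenSolution f 1 = 0 := integral_same

end Calculus

section Estimates

variable {f g w : ℝ → ℝ} {t : ℝ}

theorem intervalIntegrable_primitive (hf : IntervalIntegrable f volume 0 1)
    (ht : t ∈ Icc (0:ℝ) 1) : IntervalIntegrable (fun σ => ∫ s in 0..σ, f s) volume t 1 := by
  refine ContinuousOn.intervalIntegrable ((continuousOn_primitive_interval' hf ?_).mono ?_)
  · simp
  · rw [uIcc_of_le ht.2, uIcc_of_le zero_le_one]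
    exact Icc_subset_Icc_left ht.1

theorem IntervalIntegrable.of_mem_Icc_zero_one (hf : IntervalIntegrable f volume 0 1) {σ : ℝ}
    (hσ : σ ∈ Icc (0:ℝ) 1) : IntervalIntegrable f volume 0 σ :=
  hf.mono_set (uIcc_subset_uIcc_left (by rwa [uIcc_of_le zero_le_one]))

theorem greenSolution_mono (hf : IntervalIntegrable f volume 0 1)
    (hg : IntervalIntegrable g volume 0 1) (hfg : ∀ s ∈ Ioo (0:ℝ) 1, f s ≤ g s)
    (ht : t ∈ Icc (0:ℝ) 1) : greenSolution f t ≤ greenSolution g t :=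
  integral_mono_on ht.2 (intervalIntegrable_primitive hf ht) (intervalIntegrable_primitive hg ht)
    fun _ hσ => integral_mono_on_of_le_Ioo (ht.1.trans hσ.1)
      (hf.of_mem_Icc_zero_one ⟨ht.1.trans hσ.1, hσ.2⟩)
      (hg.of_mem_Icc_zero_one ⟨ht.1.trans hσ.1, hσ.2⟩)
      fun s hs => hfg s ⟨hs.1, hs.2.trans_le hσ.2⟩

theorem abs_greenSolution_le (hf : IntervalIntegrable f volume 0 1)
    (hw : IntervalIntegrable w volume 0 1) (hfw : ∀ s ∈ Ioo (0:ℝ) 1, |f s| ≤ w s)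
    (ht : t ∈ Icc (0:ℝ) 1) : |greenSolution f t| ≤ greenSolution w 0 := by
  have hW : ∀ σ ∈ Icc (0:ℝ) 1, |∫ s in 0..σ, f s| ≤ ∫ s in 0..σ, w s := fun σ hσ =>
    (abs_integral_le_integral_abs hσ.1).trans <| integral_mono_on_of_le_Ioo hσ.1
      (hf.of_mem_Icc_zero_one hσ).abs (hw.of_mem_Icc_zero_one hσ)
      fun s hs => hfw s ⟨hs.1, hs.2.trans_le hσ.2⟩
  calc |greenSolution f t| ≤ ∫ σ in t..1, |∫ s in 0..σ, f s| := abs_integral_le_integral_abs ht.2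
    _ ≤ ∫ σ in t..1, ∫ s in 0..σ, w s :=
      integral_mono_on ht.2 (intervalIntegrable_primitive hf ht).abs
        (intervalIntegrable_primitive hw ht) fun σ hσ => hW σ ⟨ht.1.trans hσ.1, hσ.2⟩
    _ ≤ greenSolution w 0 := by
      refine integral_mono_interval ht.1 ht.2 le_rfl ?_
        (intervalIntegrable_primitive hw ⟨le_rfl, zero_le_one⟩)
      refine (ae_restrict_iff' measurableSet_Ioc).2 (Filter.Eventually.of_forall fun σ hσ => ?_)
      exact (abs_nonneg _).trans (hW σ (Ioc_subset_Icc_self hσ))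

theorem greenSolution_add (hf : IntervalIntegrable f volume 0 1)
    (hg : IntervalIntegrable g volume 0 1) (ht : t ∈ Icc (0:ℝ) 1) :
    greenSolution (fun s => f s + g s) t = greenSolution f t + greenSolution g t := by
  rw [greenSolution, greenSolution, greenSolution, ← integral_add
    (intervalIntegrable_primitive hf ht) (intervalIntegrable_primitive hg ht)]
  refine integral_congr fun σ hσ => ?_
  rw [uIcc_of_le ht.2] at hσ
  have hσ' : σ ∈ Icc (0:ℝ) 1 := ⟨ht.1.trans hσ.1, hσ.2⟩
  exact integral_add (hf.of_mem_Icc_zero_one hσ') (hg.of_mem_Icc_zero_one hσ')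

theorem greenSolution_sub (hf : IntervalIntegrable f volume 0 1)
    (hg : IntervalIntegrable g volume 0 1) (ht : t ∈ Icc (0:ℝ) 1) :
    greenSolution (fun s => f s - g s) t = greenSolution f t - greenSolution g t := by
  rw [greenSolution, greenSolution, greenSolution, ← integral_sub
    (intervalIntegrable_primitive hf ht) (intervalIntegrable_primitive hg ht)]
  refine integral_congr fun σ hσ => ?_
  rw [uIcc_of_le ht.2] at hσ
  have hσ' : σ ∈ Icc (0:ℝ) 1 := ⟨ht.1.trans hσ.1, hσ.2⟩
  exact integral_sub (hf.of_mem_Icc_zero_one hσ') (hg.of_mem_Icc_zero_one hσ')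

theorem greenSolution_const_mul (c : ℝ) (f : ℝ → ℝ) (t : ℝ) :
    greenSolution (fun s => c * f s) t = c * greenSolution f t := by
  simp only [greenSolution, intervalIntegral.integral_const_mul]

theorem greenSolution_affine (a b t : ℝ) :
    greenSolution (fun s => a * s + b) t = a * (1 - t ^ 3) / 6 + b * (1 - t ^ 2) / 2 := by
  have inner : ∀ σ : ℝ, ∫ s in 0..σ, a * s + b = a * σ ^ 2 / 2 + b * σ := fun σ => by
    rw [integral_add ((continuous_const_mul a).intervalIntegrable _ _) intervalIntegrable_const,
      intervalIntegral.integral_const_mul]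
    simp only [integral_id, ne_eq, OfNat.ofNat_ne_zero, not_false_eq_true, zero_pow, sub_zero,
      intervalIntegral.integral_const, smul_eq_mul]
    ring
  simp only [greenSolution, inner]
  rw [integral_add ((by fun_prop : Continuous fun σ : ℝ => a * σ ^ 2 / 2).intervalIntegrable _ _)
      ((continuous_const_mul b).intervalIntegrable _ _),
    intervalIntegral.integral_div, intervalIntegral.integral_const_mul,
    intervalIntegral.integral_const_mul]
  simp only [integral_pow, Nat.reduceAdd, one_pow, Nat.cast_ofNat, integral_id]
  ring

theorem hasDerivAt_neg_two_mul_sqrt_one_sub {s : ℝ} (hs : s < 1) :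
    HasDerivAt (fun s => -2 * √(1 - s)) (√(1 - s))⁻¹ s := by
  have hpos : 0 < √(1 - s) := sqrt_pos.2 (sub_pos.2 hs)
  refine ((((hasDerivAt_id' s).const_sub 1).sqrt (sub_pos.2 hs).ne').const_mul (-2)).congr_deriv
    ?_
  field_simp

theorem intervalIntegrable_inv_sqrt_one_sub :
    IntervalIntegrable (fun s => (√(1 - s))⁻¹) volume 0 1 :=
  intervalIntegrable_deriv_of_nonneg (g := fun s => -2 * √(1 - s)) (by fun_prop)
    (fun _ hx => hasDerivAt_neg_two_mul_sqrt_one_sub (by simpa using hx.2))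
    fun _ _ => by positivity

theorem integral_inv_sqrt_one_sub {σ : ℝ} (hσ : σ ∈ Icc (0:ℝ) 1) :
    ∫ s in 0..σ, (√(1 - s))⁻¹ = 2 - 2 * √(1 - σ) := by
  rw [integral_eq_sub_of_hasDerivAt_of_le hσ.1 (f := fun s => -2 * √(1 - s)) (by fun_prop)
    (fun _ hx => hasDerivAt_neg_two_mul_sqrt_one_sub (hx.2.trans_le hσ.2))
    (intervalIntegrable_inv_sqrt_one_sub.of_mem_Icc_zero_one hσ)]
  simp only [neg_mul, sub_zero, sqrt_one, mul_one, sub_neg_eq_add]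
  ring

theorem integral_sqrt_one_sub : ∫ σ in (0:ℝ)..1, √(1 - σ) = 2 / 3 := by
  rw [integral_comp_sub_left (fun x => √x)]
  simp only [sub_self, sub_zero, sqrt_eq_rpow]
  rw [integral_rpow (Or.inl (by norm_num))]
  norm_num

theorem greenSolution_inv_sqrt_one_sub_zero : greenSolution (fun s => (√(1 - s))⁻¹) 0 = 2 / 3 := by
  have h : ∀ σ ∈ uIcc (0:ℝ) 1, ∫ s in 0..σ, (√(1 - s))⁻¹ = 2 - 2 * √(1 - σ) := fun σ hσ =>
    integral_inv_sqrt_one_sub (by rwa [uIcc_of_le zero_le_one] at hσ)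
  rw [greenSolution, integral_congr h, integral_sub intervalIntegrable_const
    ((by fun_prop : Continuous fun σ : ℝ => 2 * √(1 - σ)).intervalIntegrable _ _),
    intervalIntegral.integral_const_mul, integral_sqrt_one_sub]
  norm_num

end Estimates

theorem lipschitzWith_sigmoid : LipschitzWith 4⁻¹ sigmoid := by
  refine lipschitzWith_of_nnnorm_deriv_le differentiable_sigmoid fun x => ?_
  rw [deriv_sigmoid, ← NNReal.coe_le_coe, coe_nnnorm, Real.norm_eq_abs,
    abs_of_nonneg (mul_nonneg (sigmoid_nonneg x) (sub_nonneg.2 (sigmoid_le_one x)))]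
  push_cast
  nlinarith [sq_nonneg (sigmoid x - 1 / 2)]

theorem abs_arctan_le_arctan {r x : ℝ} (hx : x ∈ Icc (-r) r) : |arctan x| ≤ arctan r :=
  abs_le.2 ⟨by simpa [arctan_neg] using arctan_strictMono.monotone hx.1,
    arctan_strictMono.monotone hx.2⟩

theorem abs_mul_arctan_sub_le {r a b : ℝ} (ha : a ∈ Icc (-r) r) (hb : b ∈ Icc (-r) r) :
    |a * arctan a - b * arctan b| ≤ (arctan r + 1 / 2) * |a - b| := by
  have hderiv : ∀ x ∈ Icc (-r) r, HasDerivWithinAt (fun x => x * arctan x)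
      (1 * arctan x + x * (1 / (1 + x ^ 2))) (Icc (-r) r) x := fun x _ =>
    ((hasDerivAt_id' x).mul (hasDerivAt_arctan x)).hasDerivWithinAt
  have hbound : ∀ x ∈ Icc (-r) r, ‖1 * arctan x + x * (1 / (1 + x ^ 2))‖ ≤ arctan r + 1 / 2 := by
    intro x hx
    have hfrac : |x * (1 / (1 + x ^ 2))| ≤ 1 / 2 := by
      have hpos : (0:ℝ) < 1 + x ^ 2 := by positivity
      rw [mul_one_div, abs_div, abs_of_pos hpos, div_le_iff₀ hpos]
      cases abs_cases x <;> nlinarith [sq_nonneg (x - 1), sq_nonneg (x + 1)]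
    rw [one_mul, Real.norm_eq_abs]
    exact (abs_add_le _ _).trans (add_le_add (abs_arctan_le_arctan hx) hfrac)
  simpa only [Real.norm_eq_abs] using
    (convex_Icc (-r) r).norm_image_sub_le_of_norm_hasDerivWithin_le hderiv hbound hb ha

theorem arctan_three_halves_le : arctan (3 / 2) ≤ π / 3 := by
  rw [← arctan_sqrt_three]
  exact arctan_strictMono.monotone (le_sqrt_of_sq_le (by norm_num))

theorem abs_sqrt_sub_sqrt_le {m a b : ℝ} (hm : 0 < m) (ha : m ≤ a) (hb : m ≤ b) :
    |√a - √b| ≤ |a - b| / (2 * √m) := by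
  have hsum : 2 * √m ≤ √a + √b := by
    linarith [sqrt_le_sqrt ha, sqrt_le_sqrt hb]
  have hprod : |√a - √b| * (√a + √b) = |a - b| := by
    have h : (√a - √b) * (√a + √b) = a - b := by
      ring_nf
      rw [sq_sqrt (hm.le.trans ha), sq_sqrt (hm.le.trans hb)]
    rw [← h, abs_mul, abs_of_nonneg (add_nonneg (sqrt_nonneg a) (sqrt_nonneg b))]
  rw [le_div_iff₀ (by positivity), ← hprod]
  exact mul_le_mul_of_nonneg_left hsum (abs_nonneg _)

theorem abs_inv_add_one_sub_inv_add_one_le {p q : ℝ} (hp : 0 ≤ p) (hq : 0 ≤ q) :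
    |(p + 1)⁻¹ - (q + 1)⁻¹| ≤ |p - q| := by
  rw [inv_sub_inv (by positivity) (by positivity), abs_div, add_sub_add_right_eq_sub, abs_sub_comm,
    abs_of_pos (by positivity : 0 < (p + 1) * (q + 1))]
  exact div_le_self (abs_nonneg (p - q)) (by nlinarith : (1:ℝ) ≤ (p + 1) * (q + 1))

/-- The right-hand sides of the system in the unknowns `x` and `Y = 6 y`; without this rescaling
of `y` the solution operator would not contract. -/
def rhsX (s x Y : ℝ) : ℝ := (s + 1) / (Y / 6 + 1) + x * arctan x

def rhsY (s x Y : ℝ) : ℝ := 6 * s * sigmoid x + 2 * √(Y / 6)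

section Bounds

variable {s x x' Y Y' δ : ℝ}

theorem mul_arctan_mem_Icc (hx : x ∈ Icc (0:ℝ) (3 / 2)) : x * arctan x ∈ Icc 0 (π / 2) := by
  have h0 : 0 ≤ arctan x := by simpa using arctan_strictMono.monotone hx.1
  have h1 : arctan x ≤ π / 3 := (arctan_strictMono.monotone hx.2).trans arctan_three_halves_le
  exact ⟨mul_nonneg hx.1 h0, by nlinarith [hx.2]⟩

theorem rhsX_mem_Icc (hs : 0 ≤ s) (hx : x ∈ Icc (0:ℝ) (3 / 2)) (hY : Y ∈ Icc (0:ℝ) 6) :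
    rhsX s x Y ∈ Icc ((s + 1) / 2) (s + 1 + π / 2) := by
  have hxa := mul_arctan_mem_Icc hx
  have hfrac : (s + 1) / 2 ≤ (s + 1) / (Y / 6 + 1) ∧ (s + 1) / (Y / 6 + 1) ≤ s + 1 := by
    constructor
    · exact div_le_div_of_nonneg_left (by linarith) (by linarith [hY.1]) (by linarith [hY.2])
    · exact div_le_self (by linarith) (by linarith [hY.1])
  constructor <;> unfold rhsX <;> linarith [hxa.1, hxa.2, hfrac.1, hfrac.2]

theorem rhsY_mem_Icc (hs : 0 ≤ s) (hx : 0 ≤ x) (hY : Y ∈ Icc (0:ℝ) 6) :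
    rhsY s x Y ∈ Icc (3 * s) (6 * s + 2) := by
  have hσ : 2⁻¹ ≤ sigmoid x := sigmoid_zero ▸ sigmoid_monotone hx
  have hσ1 := sigmoid_le_one x
  have hsq : √(Y / 6) ≤ 1 := sqrt_le_one.2 (by linarith [hY.2])
  have hsq0 := sqrt_nonneg (Y / 6)
  constructor <;> unfold rhsY <;> nlinarith

theorem abs_rhsX_sub_le (hs : 0 ≤ s) (hx : x ∈ Icc (0:ℝ) (3 / 2)) (hx' : x' ∈ Icc (0:ℝ) (3 / 2))
    (hY : 0 ≤ Y) (hY' : 0 ≤ Y') (hxδ : |x - x'| ≤ δ) (hYδ : |Y - Y'| ≤ δ) :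
    |rhsX s x Y - rhsX s x' Y'| ≤ δ / 6 * s + (π / 3 + 2 / 3) * δ := by
  have hfrac : |(Y / 6 + 1)⁻¹ - (Y' / 6 + 1)⁻¹| ≤ δ / 6 := by
    refine (abs_inv_add_one_sub_inv_add_one_le (by positivity) (by positivity)).trans ?_
    rw [← sub_div, abs_div, abs_of_pos (by norm_num : (0:ℝ) < 6)]
    linarith
  have harc := abs_mul_arctan_sub_le (r := 3 / 2) ⟨by linarith [hx.1], hx.2⟩
    ⟨by linarith [hx'.1], hx'.2⟩
  have hδ : 0 ≤ δ := (abs_nonneg _).trans hxδ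
  calc |rhsX s x Y - rhsX s x' Y'|
      = |(s + 1) * ((Y / 6 + 1)⁻¹ - (Y' / 6 + 1)⁻¹) + (x * arctan x - x' * arctan x')| := by
        unfold rhsX
        ring_nf
    _ ≤ (s + 1) * (δ / 6) + (π / 3 + 1 / 2) * δ := by
        refine (abs_add_le _ _).trans (add_le_add ?_ ?_)
        · rw [abs_mul, abs_of_nonneg (by linarith)]
          exact mul_le_mul_of_nonneg_left hfrac (by linarith)
        · refine harc.trans (mul_le_mul ?_ hxδ (abs_nonneg _) (by linarith [pi_pos]))
          linarith [arctan_three_halves_le]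
    _ = δ / 6 * s + (π / 3 + 2 / 3) * δ := by ring

theorem abs_rhsY_sub_le (hs : s ∈ Ico (0:ℝ) 1) (hY : (1 - s) / 2 ≤ Y) (hY' : (1 - s) / 2 ≤ Y')
    (hxδ : |x - x'| ≤ δ) (hYδ : |Y - Y'| ≤ δ) :
    |rhsY s x Y - rhsY s x' Y'| ≤ 3 / 2 * δ * s + δ / √3 * (√(1 - s))⁻¹ := by
  have hm : 0 < (1 - s) / 12 := by linarith [hs.2]
  have hsig : |sigmoid x - sigmoid x'| ≤ 4⁻¹ * δ := by
    have := lipschitzWith_sigmoid.dist_le_mul x x'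
    simp only [Real.dist_eq, NNReal.coe_inv, NNReal.coe_ofNat] at this
    linarith [mul_le_mul_of_nonneg_left hxδ (by norm_num : (0:ℝ) ≤ 4⁻¹)]
  have hsqrt : |√(Y / 6) - √(Y' / 6)| ≤ δ / 6 / (2 * √((1 - s) / 12)) := by
    refine (abs_sqrt_sub_sqrt_le hm (by linarith) (by linarith)).trans ?_
    rw [← sub_div, abs_div, abs_of_pos (by norm_num : (0:ℝ) < 6)]
    exact div_le_div_of_nonneg_right (by linarith) (by positivity)
  have hconst : 2 * (δ / 6 / (2 * √((1 - s) / 12))) = δ / √3 * (√(1 - s))⁻¹ := by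
    have h12 : 6 * √((1 - s) / 12) = √3 * √(1 - s) := by
      rw [← sqrt_mul (by norm_num), show (6:ℝ) = √(6 ^ 2) from (sqrt_sq (by norm_num)).symm,
        ← sqrt_mul (by positivity)]
      ring_nf
    have hpos : 0 < √((1 - s) / 12) := sqrt_pos.2 hm
    rw [← div_eq_mul_inv, div_div δ (√3), ← h12]
    field_simp
  calc |rhsY s x Y - rhsY s x' Y'|
      = |6 * s * (sigmoid x - sigmoid x') + 2 * (√(Y / 6) - √(Y' / 6))| := by
        unfold rhsY
        ring_nf
    _ ≤ 6 * s * (4⁻¹ * δ) + 2 * (δ / 6 / (2 * √((1 - s) / 12))) := by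
        refine (abs_add_le _ _).trans (add_le_add ?_ ?_)
        · rw [abs_mul, abs_of_nonneg (by linarith [hs.1])]
          exact mul_le_mul_of_nonneg_left hsig (by linarith [hs.1])
        · rw [abs_mul, abs_two]
          exact mul_le_mul_of_nonneg_left hsqrt zero_le_two
    _ = 3 / 2 * δ * s + δ / √3 * (√(1 - s))⁻¹ := by rw [hconst]; ring

end Bounds

section FixedPoint

def Admissible : Set C(Icc (0:ℝ) 1, ℝ × ℝ) :=
  {u | ∀ t, (u t).1 ∈ Icc 0 (3 / 2) ∧ (u t).2 ∈ Icc ((1 - (t : ℝ)) / 2) 6}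

def extendIcc (u : C(Icc (0:ℝ) 1, ℝ × ℝ)) : ℝ → ℝ × ℝ := IccExtend zero_le_one u

def forcingX (u : C(Icc (0:ℝ) 1, ℝ × ℝ)) (s : ℝ) : ℝ := rhsX s (extendIcc u s).1 (extendIcc u s).2

def forcingY (u : C(Icc (0:ℝ) 1, ℝ × ℝ)) (s : ℝ) : ℝ := rhsY s (extendIcc u s).1 (extendIcc u s).2

variable {u v : C(Icc (0:ℝ) 1, ℝ × ℝ)} {t : ℝ}

theorem extendIcc_mem (hu : u ∈ Admissible) (s : ℝ) :
    (extendIcc u s).1 ∈ Icc (0:ℝ) (3 / 2) ∧ (extendIcc u s).2 ∈ Icc (0:ℝ) 6 := by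
  obtain ⟨h1, h2⟩ := hu (projIcc 0 1 zero_le_one s)
  refine ⟨h1, ?_, h2.2⟩
  change 0 ≤ (u (projIcc 0 1 zero_le_one s)).2
  linarith [h2.1, (projIcc 0 1 zero_le_one s).2.2]

theorem le_extendIcc_snd (hu : u ∈ Admissible) {s : ℝ} (hs : s ∈ Icc (0:ℝ) 1) :
    (1 - s) / 2 ≤ (extendIcc u s).2 := by
  rw [extendIcc, IccExtend_of_mem _ _ hs]
  exact (hu ⟨s, hs⟩).2.1

theorem abs_extendIcc_sub_le (u v : C(Icc (0:ℝ) 1, ℝ × ℝ)) (s : ℝ) :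
    |(extendIcc u s).1 - (extendIcc v s).1| ≤ dist u v ∧
      |(extendIcc u s).2 - (extendIcc v s).2| ≤ dist u v := by
  have h := ContinuousMap.dist_apply_le_dist (f := u) (g := v) (projIcc 0 1 zero_le_one s)
  rwa [Prod.dist_eq, max_le_iff, Real.dist_eq, Real.dist_eq] at h

theorem continuous_forcingX (hu : u ∈ Admissible) : Continuous (forcingX u) := by
  have he : Continuous (extendIcc u) := u.continuous.Icc_extend'
  refine Continuous.add (Continuous.div (by fun_prop) (by fun_prop) fun s => ?_) (by fun_prop)
  linarith [(extendIcc_mem hu s).2.1]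

theorem continuous_forcingY (u : C(Icc (0:ℝ) 1, ℝ × ℝ)) : Continuous (forcingY u) := by
  have he : Continuous (extendIcc u) := u.continuous.Icc_extend'
  unfold forcingY rhsY
  fun_prop

theorem greenSolution_forcingX_mem (hu : u ∈ Admissible) (ht : t ∈ Icc (0:ℝ) 1) :
    greenSolution (forcingX u) t ∈ Icc ((1 - t ^ 3) / 12 + (1 - t ^ 2) / 4) (3 / 2) := by
  have hf : IntervalIntegrable (forcingX u) volume 0 1 :=
    (continuous_forcingX hu).intervalIntegrable 0 1
  have hb : ∀ s ∈ Ioo (0:ℝ) 1, forcingX u s ∈ Icc ((s + 1) / 2) (s + 1 + π / 2) :=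
    fun s hs => rhsX_mem_Icc hs.1.le (extendIcc_mem hu s).1 (extendIcc_mem hu s).2
  have hlow := greenSolution_mono (g := forcingX u) (f := fun s => 1 / 2 * s + 1 / 2)
    ((by fun_prop : Continuous fun s : ℝ => 1 / 2 * s + 1 / 2).intervalIntegrable 0 1) hf
    (fun s hs => by linarith [(hb s hs).1]) ht
  have hup := greenSolution_mono (f := forcingX u) (g := fun s => 1 * s + (1 + π / 2)) hf
    ((by fun_prop : Continuous fun s : ℝ => 1 * s + (1 + π / 2)).intervalIntegrable 0 1)
    (fun s hs => by linarith [(hb s hs).2]) ht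
  rw [greenSolution_affine] at hlow hup
  refine ⟨by linarith, hup.trans ?_⟩
  nlinarith [pi_lt_d2, pow_nonneg ht.1 3, mul_nonneg pi_pos.le (pow_nonneg ht.1 2)]

theorem greenSolution_forcingY_mem (hu : u ∈ Admissible) (ht : t ∈ Icc (0:ℝ) 1) :
    greenSolution (forcingY u) t ∈ Icc ((1 - t ^ 3) / 2) 6 := by
  have hf : IntervalIntegrable (forcingY u) volume 0 1 :=
    (continuous_forcingY u).intervalIntegrable 0 1
  have hb : ∀ s ∈ Ioo (0:ℝ) 1, forcingY u s ∈ Icc (3 * s) (6 * s + 2) :=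
    fun s hs => rhsY_mem_Icc hs.1.le (extendIcc_mem hu s).1.1 (extendIcc_mem hu s).2
  have hlow := greenSolution_mono (g := forcingY u) (f := fun s => 3 * s + 0)
    ((by fun_prop : Continuous fun s : ℝ => 3 * s + 0).intervalIntegrable 0 1) hf
    (fun s hs => by linarith [(hb s hs).1]) ht
  have hup := greenSolution_mono (f := forcingY u) (g := fun s => 6 * s + 2) hf
    ((by fun_prop : Continuous fun s : ℝ => 6 * s + 2).intervalIntegrable 0 1)
    (fun s hs => (hb s hs).2) ht
  rw [greenSolution_affine] at hlow hup
  refine ⟨by linarith, hup.trans ?_⟩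
  nlinarith [pow_nonneg ht.1 3, pow_nonneg ht.1 2]

theorem abs_greenSolution_forcingX_sub_le (hu : u ∈ Admissible) (hv : v ∈ Admissible)
    (ht : t ∈ Icc (0:ℝ) 1) :
    |greenSolution (forcingX u) t - greenSolution (forcingX v) t| ≤ 9 / 10 * dist u v := by
  have hf := continuous_forcingX hu
  have hg := continuous_forcingX hv
  rw [← greenSolution_sub (hf.intervalIntegrable 0 1) (hg.intervalIntegrable 0 1) ht]
  refine (abs_greenSolution_le ((hf.sub hg).intervalIntegrable 0 1)
    ((by fun_prop : Continuous fun s : ℝ =>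
      dist u v / 6 * s + (π / 3 + 2 / 3) * dist u v).intervalIntegrable 0 1)
    (fun s hs => ?_) ht).trans ?_
  · exact abs_rhsX_sub_le hs.1.le (extendIcc_mem hu s).1 (extendIcc_mem hv s).1
      (extendIcc_mem hu s).2.1 (extendIcc_mem hv s).2.1 (abs_extendIcc_sub_le u v s).1
      (abs_extendIcc_sub_le u v s).2
  · rw [greenSolution_affine]
    nlinarith [pi_lt_d2, dist_nonneg (x := u) (y := v)]

theorem abs_greenSolution_forcingY_sub_le (hu : u ∈ Admissible) (hv : v ∈ Admissible)
    (ht : t ∈ Icc (0:ℝ) 1) :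
    |greenSolution (forcingY u) t - greenSolution (forcingY v) t| ≤ 9 / 10 * dist u v := by
  have hf := continuous_forcingY u
  have hg := continuous_forcingY v
  have hlin : IntervalIntegrable (fun s => 3 / 2 * dist u v * s) volume 0 1 :=
    (continuous_const_mul _).intervalIntegrable 0 1
  have hsing := intervalIntegrable_inv_sqrt_one_sub.const_mul (dist u v / √3)
  rw [← greenSolution_sub (hf.intervalIntegrable 0 1) (hg.intervalIntegrable 0 1) ht]
  refine (abs_greenSolution_le ((hf.sub hg).intervalIntegrable 0 1) (hlin.add hsing)
    (fun s hs => ?_) ht).trans ?_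
  · exact abs_rhsY_sub_le ⟨hs.1.le, hs.2⟩ (le_extendIcc_snd hu (Ioo_subset_Icc_self hs))
      (le_extendIcc_snd hv (Ioo_subset_Icc_self hs)) (abs_extendIcc_sub_le u v s).1
      (abs_extendIcc_sub_le u v s).2
  · have hlin0 : greenSolution (fun s => 3 / 2 * dist u v * s) 0 = 3 / 2 * dist u v / 6 := by
      simpa using greenSolution_affine (3 / 2 * dist u v) 0 0
    rw [greenSolution_add hlin hsing ⟨le_rfl, zero_le_one⟩, hlin0,
      greenSolution_const_mul (dist u v / √3) (fun s => (√(1 - s))⁻¹),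
      greenSolution_inv_sqrt_one_sub_zero]
    have hsqrt3 : dist u v / √3 ≤ 2 / 3 * dist u v := by
      rw [div_le_iff₀ (by positivity)]
      nlinarith [le_sqrt_of_sq_le (show (3 / 2 : ℝ) ^ 2 ≤ 3 by norm_num),
        dist_nonneg (x := u) (y := v)]
    nlinarith [dist_nonneg (x := u) (y := v)]

def solutionMap (u : Admissible) : Admissible :=
  ⟨⟨fun t => (greenSolution (forcingX u) t, greenSolution (forcingY u) t),
    ((contDiff_greenSolution (continuous_forcingX u.2)).continuous.prodMk
      (contDiff_greenSolution (continuous_forcingY u)).continuous).comp continuous_subtype_val⟩,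
    fun t => by
      have hX := greenSolution_forcingX_mem u.2 t.2
      have hY := greenSolution_forcingY_mem u.2 t.2
      have h0 := t.2.1
      have h1 := t.2.2
      refine ⟨⟨?_, hX.2⟩, ?_, hY.2⟩ <;> dsimp only [ContinuousMap.coe_mk]
      · nlinarith [hX.1, pow_le_one₀ h0 h1 (n := 3), pow_le_one₀ h0 h1 (n := 2)]
      · nlinarith [hY.1, mul_nonneg h0 (mul_nonneg (add_nonneg h0 zero_le_one) (sub_nonneg.2 h1))]⟩

theorem contractingWith_solutionMap : ContractingWith (9 / 10) solutionMap := by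
  refine ⟨by rw [← NNReal.coe_lt_coe]; norm_num, LipschitzWith.of_dist_le_mul fun u v => ?_⟩
  rw [Subtype.dist_eq, Subtype.dist_eq]
  refine (ContinuousMap.dist_le (by positivity)).2 fun t => ?_
  rw [Prod.dist_eq, Real.dist_eq, Real.dist_eq]
  push_cast
  exact max_le (abs_greenSolution_forcingX_sub_le u.2 v.2 t.2)
    (abs_greenSolution_forcingY_sub_le u.2 v.2 t.2)

theorem isClosed_admissible : IsClosed Admissible := by
  simp only [Admissible, ofPred_forall]
  exact isClosed_iInter fun t =>
    (isClosed_Icc.prod isClosed_Icc).preimage (continuous_eval_const t)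

theorem exists_fixedPoint_solutionMap : ∃ u ∈ Admissible, ∀ t ∈ Icc (0:ℝ) 1,
    extendIcc u t = (greenSolution (forcingX u) t, greenSolution (forcingY u) t) := by
  have : CompleteSpace Admissible := isClosed_admissible.completeSpace_coe
  have : Nonempty Admissible := ⟨⟨ContinuousMap.const _ (0, 6),
    fun t => ⟨⟨le_rfl, by norm_num⟩, show (1 - (t : ℝ)) / 2 ≤ 6 by linarith [t.2.1], le_rfl⟩⟩⟩
  have hfix := contractingWith_solutionMap.fixedPoint_isFixedPt
  refine ⟨_, (ContractingWith.fixedPoint solutionMap contractingWith_solutionMap).2,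
    fun t ht => ?_⟩
  rw [extendIcc, IccExtend_of_mem _ _ ht]
  exact (congrArg (fun w : Admissible => (w : C(Icc (0:ℝ) 1, ℝ × ℝ)) ⟨t, ht⟩) hfix).symm

end FixedPoint

end

theorem concrete_system_coexistence_solution :
    ∃ x y : ℝ → ℝ,
      ContDiffOn ℝ 2 x (Set.Icc 0 1) ∧ ContDiffOn ℝ 2 y (Set.Icc 0 1) ∧
      (∀ t ∈ Set.Icc (0:ℝ) 1, 0 ≤ x t) ∧ (∀ t ∈ Set.Icc (0:ℝ) 1, 0 ≤ y t) ∧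
      (∃ t ∈ Set.Icc (0:ℝ) 1, x t ≠ 0) ∧ (∃ t ∈ Set.Icc (0:ℝ) 1, y t ≠ 0) ∧
      (∀ t ∈ Set.Icc (0:ℝ) 1,
        iteratedDerivWithin 2 x (Set.Icc 0 1) t
          + (t + 1) / (y t + 1) + x t * Real.arctan (x t) = 0) ∧
      (∀ t ∈ Set.Icc (0:ℝ) 1,
        iteratedDerivWithin 2 y (Set.Icc 0 1) t
          + t / (Real.exp (-(x t)) + 1) + (1 / 3) * Real.sqrt (y t) = 0) ∧
      derivWithin x (Set.Icc 0 1) 0 = 0 ∧ x 1 = 0 ∧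
      derivWithin y (Set.Icc 0 1) 0 = 0 ∧ y 1 = 0 := by
  obtain ⟨u, hu, hfix⟩ := exists_fixedPoint_solutionMap
  have hX : Continuous (forcingX u) := continuous_forcingX hu
  have hY : Continuous fun s => 6⁻¹ * forcingY u s := (continuous_forcingY u).const_mul _
  have hy : ∀ t, greenSolution (fun s => 6⁻¹ * forcingY u s) t
      = 6⁻¹ * greenSolution (forcingY u) t := greenSolution_const_mul _ _
  have hud : UniqueDiffOn ℝ (Icc (0:ℝ) 1) := uniqueDiffOn_Icc zero_lt_one
  have h0 : (0:ℝ) ∈ Icc (0:ℝ) 1 := left_mem_Icc.2 zero_le_one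
  refine ⟨greenSolution (forcingX u), greenSolution (fun s => 6⁻¹ * forcingY u s),
    (contDiff_greenSolution hX).contDiffOn, (contDiff_greenSolution hY).contDiffOn,
    fun t ht => ?_, fun t ht => ?_, ⟨0, h0, ?_⟩, ⟨0, h0, ?_⟩, fun t ht => ?_, fun t ht => ?_,
    derivWithin_greenSolution_zero hX (hud 0 h0), greenSolution_one _,
    derivWithin_greenSolution_zero hY (hud 0 h0), greenSolution_one _⟩
  · nlinarith [(greenSolution_forcingX_mem hu ht).1, pow_le_one₀ ht.1 ht.2 (n := 3),
      pow_le_one₀ ht.1 ht.2 (n := 2)]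
  · rw [hy]
    nlinarith [(greenSolution_forcingY_mem hu ht).1, pow_le_one₀ ht.1 ht.2 (n := 3)]
  · have := (greenSolution_forcingX_mem hu h0).1
    norm_num at this
    positivity
  · have := (greenSolution_forcingY_mem hu h0).1
    norm_num at this
    rw [hy]
    positivity
  · rw [iteratedDerivWithin_two_greenSolution hX hud ht, hy, forcingX, hfix t ht, rhsX]
    ring
  · rw [iteratedDerivWithin_two_greenSolution hY hud ht, hy, forcingY, hfix t ht, rhsY,
      sigmoid_def]
    ring_nf
end
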